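/- arXiv:2009.05996 — 8 statements merged into one kernel-verified Lean document; each statement's English description precedes it below -/
import Mathlib

section
/- If the edge weight matrices X_{ij} in the block matrix X = [X_{ij}] (with each X_{ij} lower triangular of size s×s) are all lower triangular, then the spectrum of X equals the union over j = 1,…,s of the spectra of the m×m matrices X̃_{jj} defined by (X̃_{jj})_{ik} = (X_{ik})_{jj}. -/
/-!
Ordering the index pairs `(i, j)` by `j` alone makes `X` block lower triangular, the diagonal
block for `j` being `X̃_{jj}` up to relabelling. The characteristic polynomial of a block
triangular matrix is the product of those of its diagonal blocks, so its roots are the union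
of theirs.
-/

open Matrix

namespace Matrix

variable {K ι : Type*} [Field K] [Fintype ι] [DecidableEq ι]

theorem BlockTriangular.spectrum_eq {α : Type*} [LinearOrder α] {M : Matrix ι ι K}
    {b : ι → α} (hM : M.BlockTriangular b) :
    spectrum K M = ⋃ a, spectrum K (M.toSquareBlock b a) := by
  ext μ
  simp only [mem_spectrum_iff_isRoot_charpoly, hM.charpoly, Polynomial.IsRoot.def,
    Polynomial.eval_prod, Finset.prod_eq_zero_iff, Finset.mem_image, Set.mem_iUnion]
  constructor
  · rintro ⟨a, -, ha⟩
    exact ⟨a, ha⟩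
  · rintro ⟨a, ha⟩
    refine ⟨a, ?_, ha⟩
    by_contra hempty
    have : IsEmpty {i // b i = a} := ⟨fun i => hempty ⟨i, Finset.mem_univ _, i.2⟩⟩
    simp [charpoly_isEmpty] at ha

def sndSlice {R α : Type*} (M : Matrix (ι × α) (ι × α) R) (a : α) : Matrix ι ι R :=
  of fun i k => M (i, a) (k, a)

theorem spectrum_toSquareBlock_comp_snd {α β : Type*} [Fintype β] [DecidableEq β]
    [DecidableEq α] (M : Matrix (ι × β) (ι × β) K) {f : β → α} (hf : Function.Injective f) (a : β) :
    spectrum K (M.toSquareBlock (fun p => f p.2) (f a)) = spectrum K (M.sndSlice a) := by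
  let e : {p : ι × β // f p.2 = f a} ≃ ι :=
    { toFun := fun p => p.1.1
      invFun := fun i => ⟨(i, a), rfl⟩
      left_inv := by
        rintro ⟨⟨i, c⟩, hc⟩
        obtain rfl : c = a := hf hc
        rfl
      right_inv := fun _ => rfl }
  have hblock :
      M.toSquareBlock (fun p => f p.2) (f a) = reindex e.symm e.symm (M.sndSlice a) := by
    ext ⟨⟨i, c⟩, hc⟩ ⟨⟨k, d⟩, hd⟩
    obtain rfl : c = a := hf hc
    obtain rfl : d = c := hf hd
    rfl
  rw [hblock, ← coe_reindexAlgEquiv K K, AlgEquiv.spectrum_eq]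

theorem spectrum_eq_iUnion_spectrum_sndSlice {α : Type*} [Fintype α] [LinearOrder α]
    (M : Matrix (ι × α) (ι × α) K) (hM : ∀ p q : ι × α, p.2 < q.2 → M p q = 0) :
    spectrum K M = ⋃ a, spectrum K (M.sndSlice a) := by
  have hBT : M.BlockTriangular fun p => OrderDual.toDual p.2 := fun p q h => hM p q h
  rw [hBT.spectrum_eq]
  exact Set.iUnion_congr_of_surjective _ OrderDual.toDual.surjective fun a =>
    (spectrum_toSquareBlock_comp_snd M OrderDual.toDual.injective a).symm

end Matrix

/-- If all blocks `X_{ij}` of the block matrix `X = [X_{ij}]` are lower triangular `s × s`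
matrices, then the spectrum of `X` is the union over `j` of the spectra of the `m × m`
matrices `X̃_{jj}` with `(X̃_{jj})_{ik} = (X_{ik})_{jj}`. -/
theorem spectrum_block_lowerTriangular (m s : ℕ)
    (X : Fin m → Fin m → Matrix (Fin s) (Fin s) ℝ)
    (htri : ∀ i j : Fin m, ∀ l k : Fin s, l < k → X i j l k = 0) :
    spectrum ℂ ((Matrix.of fun (p q : Fin m × Fin s) => X p.1 q.1 p.2 q.2).map
        (fun x : ℝ => (x : ℂ))) =
      ⋃ j : Fin s, spectrum ℂ ((Matrix.of fun (i k : Fin m) => X i k j j).map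
        (fun x : ℝ => (x : ℂ))) := by
  refine spectrum_eq_iUnion_spectrum_sndSlice _ fun p q h => ?_
  simp [htri p.1 q.1 p.2 q.2 h]
end

section
/- Let T be a tree on n vertices with edge weights that are nonsingular s×s real matrices, and let L be its matrix-weighted Laplacian. For any vertex v, the principal submatrix L_v obtained by deleting the row block and column block corresponding to v satisfies det(L_v) = ∏_{e ∈ E} det(W(e)), the product of the determinants of all edge weight matrices. -/
/-!
A tree with at least two vertices has two leaves, so it has a leaf `u ≠ v`; let `w` be its
neighbour and put `A = W(uw)`. Listing the block of `u` first, `L_v` becomes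
`[[A, A F], [Fᵀ A, L' + Fᵀ A F]]`, where `L'` is the reduced Laplacian of the tree with `u`
removed and `F` is minus the selector of the block of `w` (zero if `w = v`). This matrix is a lower
unitriangular matrix times `diag(A, L')` times an upper unitriangular one, so
`det L_v = det A * det L'`, and induction on the number of vertices gives the product formula.
-/

open scoped Classical
open Matrix

noncomputable def lap {V : Type*} [Fintype V] (G : SimpleGraph V) (d : ℕ)
    (W : Sym2 V → Matrix (Fin d) (Fin d) ℝ) :
    Matrix (V × Fin d) (V × Fin d) ℝ :=
  Matrix.of fun p q =>
    if p.1 = q.1 then (∑ x ∈ G.neighborFinset p.1, W (Sym2.mk p.1 x)) p.2 q.2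
    else if G.Adj p.1 q.1 then -(W (Sym2.mk p.1 q.1)) p.2 q.2 else 0

/-- A form of `Matrix.det_fromBlocks₁₁` that needs no invertibility: the Schur complement of `A`
is `D`. -/
theorem Matrix.det_fromBlocks_mul_mul_add {m n R : Type*} [Fintype m] [Fintype n]
    [DecidableEq m] [DecidableEq n] [CommRing R] (A : Matrix m m R) (E : Matrix n m R)
    (F : Matrix m n R) (D : Matrix n n R) :
    (fromBlocks A (A * F) (E * A) (D + E * A * F)).det = A.det * D.det := by
  have h : fromBlocks A (A * F) (E * A) (D + E * A * F) =
      fromBlocks 1 0 E 1 * fromBlocks A 0 0 D * fromBlocks 1 F 0 1 := by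
    simp only [fromBlocks_multiply]
    simp [Matrix.mul_assoc, add_comm]
  rw [h, det_mul, det_mul]
  simp [det_fromBlocks_zero₂₁]

namespace SimpleGraph

variable {V : Type*} {G : SimpleGraph V} {u w : V}

theorem spanningCoe_induce_compl_singleton (u : V) :
    (G.induce {u}ᶜ).spanningCoe = G.deleteIncidenceSet u := by
  rw [← G.induce_deleteIncidenceSet_of_notMem (s := {u}ᶜ) (x := u) (by simp),
    spanningCoe_induce_eq_self]
  exact (support_deleteIncidenceSet_subset G u).trans fun x hx => by simpa using hx.2

theorem prod_edgeFinset_eq_prod_incidenceFinset_mul [Fintype V] [DecidableEq V]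
    [DecidableRel G.Adj] {M : Type*} [CommMonoid M] (f : Sym2 V → M) (u : V) :
    ∏ e ∈ G.edgeFinset, f e =
      (∏ e ∈ G.incidenceFinset u, f e) * ∏ e ∈ (G.induce {u}ᶜ).edgeFinset, f (e.map (↑)) := by
  have h : (G.induce {u}ᶜ).edgeFinset.map (Function.Embedding.subtype _).sym2Map =
      G.edgeFinset \ G.incidenceFinset u := by
    apply Finset.coe_injective
    push_cast
    rw [← edgeSet_map, ← edgeSet_deleteIncidenceSet, ← spanningCoe_induce_compl_singleton]
  rw [← Finset.prod_sdiff (G.incidenceFinset_subset u), ← h, Finset.prod_map, mul_comm]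
  rfl

theorem map_neighborFinset_induce_compl_singleton [DecidableEq V] (a : ({u}ᶜ : Set V))
    [Fintype (G.neighborSet a)] [Fintype ((G.induce {u}ᶜ).neighborSet a)] :
    ((G.induce {u}ᶜ).neighborFinset a).map (Function.Embedding.subtype _) =
      (G.neighborFinset a).erase u := by
  ext x
  simp [and_comm]

theorem sum_neighborFinset_eq_sum_induce_compl_singleton_add [DecidableEq V]
    {M : Type*} [AddCommMonoid M] (f : V → M) (a : ({u}ᶜ : Set V))
    [Fintype (G.neighborSet a)] [Fintype ((G.induce {u}ᶜ).neighborSet a)]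
    [Decidable (G.Adj a u)] :
    ∑ x ∈ G.neighborFinset a, f x =
      ∑ x ∈ (G.induce {u}ᶜ).neighborFinset a, f x + if G.Adj a u then f u else 0 := by
  split_ifs with h
  · rw [← Finset.sum_erase_add _ _ ((mem_neighborFinset _ _ _).2 h),
      ← map_neighborFinset_induce_compl_singleton, Finset.sum_map]
    rfl
  · rw [← Finset.erase_eq_of_notMem (s := G.neighborFinset a) (a := u) (by simpa using h),
      ← map_neighborFinset_induce_compl_singleton, Finset.sum_map, add_zero]
    rfl

theorem incidenceFinset_eq_singleton [Fintype V] [DecidableEq V] [Fintype (G.neighborSet u)]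
    [Fintype G.edgeSet] (hdeg : G.degree u = 1) (hw : G.Adj u w) :
    G.incidenceFinset u = {s(u, w)} := by
  obtain ⟨e, he⟩ := Finset.card_eq_one.mp (G.card_incidenceFinset_eq_degree u ▸ hdeg)
  have hmem : s(u, w) ∈ G.incidenceFinset u := by simp [hw]
  rw [he, Finset.mem_singleton] at hmem
  rw [he, hmem]

theorem IsTree.exists_degree_eq_one_ne [Fintype V] [Nontrivial V] [DecidableRel G.Adj]
    (hT : G.IsTree) (v : V) : ∃ u, G.degree u = 1 ∧ u ≠ v := by
  obtain ⟨a, b, hab, ha, hb⟩ := hT.exists_ne_and_degree_eq_one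
  by_cases hav : a = v
  · exact ⟨b, hb, hav ▸ hab.symm⟩
  · exact ⟨a, ha, hav⟩

theorem IsTree.induce_compl_singleton_of_degree_eq_one (hT : G.IsTree)
    [Fintype (G.neighborSet u)] (hu : G.degree u = 1) : (G.induce {u}ᶜ).IsTree :=
  ⟨hT.connected.induce_compl_singleton_of_degree_eq_one hu, hT.isAcyclic.induce _⟩

end SimpleGraph

open SimpleGraph

noncomputable def reducedLap {V : Type*} [Fintype V] (G : SimpleGraph V) (d : ℕ)
    (W : Sym2 V → Matrix (Fin d) (Fin d) ℝ) (v : V) :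
    Matrix ({x // x ≠ v} × Fin d) ({x // x ≠ v} × Fin d) ℝ :=
  (lap G d W).submatrix (fun p => (p.1, p.2)) (fun p => (p.1, p.2))

section LeafRemoval

variable {V : Type*} [Fintype V] {G : SimpleGraph V} {d : ℕ}
  (W : Sym2 V → Matrix (Fin d) (Fin d) ℝ) {u w : V}

theorem lap_apply_eq_lap_induce_compl_singleton_add [DecidableEq V]
    (a b : ({u}ᶜ : Set V)) (i j : Fin d) :
    lap G d W (a, i) (b, j) = lap (G.induce {u}ᶜ) d (W ∘ Sym2.map (↑)) (a, i) (b, j) +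
      if a = b ∧ G.Adj a u then W s(a, u) i j else 0 := by
  by_cases hab : a = b
  · subst hab
    simp only [lap, of_apply, if_true, true_and,
      sum_neighborFinset_eq_sum_induce_compl_singleton_add (fun x => W s((a : V), x)) a]
    -- the two sides differ only in the `Fintype` instances of the neighbour sets
    split_ifs <;> simp <;> rfl
  · have hab' : (a : V) ≠ b := fun h => hab (Subtype.ext h)
    simp [lap, hab, hab']

theorem lap_apply_leaf_leaf (hu : ∀ x, G.Adj u x ↔ x = w) (i j : Fin d) :
    lap G d W (u, i) (u, j) = W s(u, w) i j := by
  have : G.neighborFinset u = {w} := by ext x; simp [hu]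
  simp [lap, this]

theorem lap_apply_leaf_of_ne (hu : ∀ x, G.Adj u x ↔ x = w) {x : V} (hx : x ≠ u)
    (i j : Fin d) : lap G d W (u, i) (x, j) = if x = w then -W s(u, w) i j else 0 := by
  by_cases h : x = w
  · subst h; simp [lap, hx.symm, hu]
  · simp [lap, hx.symm, hu, h]

theorem lap_apply_of_ne_leaf (hu : ∀ x, G.Adj u x ↔ x = w) {x : V} (hx : x ≠ u)
    (i j : Fin d) : lap G d W (x, i) (u, j) = if x = w then -W s(u, w) i j else 0 := by
  by_cases h : x = w
  · subst h; simp [lap, hx, G.adj_comm x, hu, Sym2.eq_swap]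
  · simp [lap, hx, G.adj_comm x, hu, h]

def splitLeafEquiv [DecidableEq V] {v : V} (huv : u ≠ v) :
    Fin d ⊕ ({y : ({u}ᶜ : Set V) // y ≠ ⟨v, huv.symm⟩} × Fin d) ≃ {x : V // x ≠ v} × Fin d where
  toFun
    | .inl j => (⟨u, huv⟩, j)
    | .inr (y, j) => (⟨y, fun h => y.2 (Subtype.ext h)⟩, j)
  invFun p := if h : (p.1 : V) = u then .inl p.2
    else .inr (⟨⟨p.1, h⟩, fun h' => p.1.2 (congrArg Subtype.val h')⟩, p.2)
  left_inv := by
    rintro (j | ⟨⟨⟨y, hyu⟩, hyv⟩, j⟩)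
    · simp
    · simp [show y ≠ u from hyu]
  right_inv := by
    rintro ⟨⟨x, hxv⟩, j⟩
    by_cases h : x = u
    · subst h; simp
    · simp [h]

theorem det_reducedLap_eq_det_mul_det_reducedLap_induce [DecidableEq V]
    (hu : ∀ x, G.Adj u x ↔ x = w) {v : V} (huv : u ≠ v) :
    (reducedLap G d W v).det =
      (W s(u, w)).det * (reducedLap (G.induce {u}ᶜ) d (W ∘ Sym2.map (↑)) ⟨v, huv.symm⟩).det := by
  set F : Matrix (Fin d) ({y : ({u}ᶜ : Set V) // y ≠ ⟨v, huv.symm⟩} × Fin d) ℝ :=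
    of fun j q => if (q.1 : V) = w ∧ j = q.2 then -1 else 0
  have hblocks : (reducedLap G d W v).submatrix (splitLeafEquiv huv) (splitLeafEquiv huv) =
      fromBlocks (W s(u, w)) (W s(u, w) * F) (Fᵀ * W s(u, w))
        (reducedLap (G.induce {u}ᶜ) d (W ∘ Sym2.map (↑)) ⟨v, huv.symm⟩ + Fᵀ * W s(u, w) * F) := by
    ext (i | ⟨⟨⟨x, hxu⟩, hxv⟩, i⟩) (j | ⟨⟨⟨y, hyu⟩, hyv⟩, j⟩)
    · simp [reducedLap, splitLeafEquiv, lap_apply_leaf_leaf W hu]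
    · simp [reducedLap, splitLeafEquiv, lap_apply_leaf_of_ne W hu hyu, F, mul_apply, ite_and,
        Finset.sum_ite_irrel]
    · simp [reducedLap, splitLeafEquiv, lap_apply_of_ne_leaf W hu hxu, F, mul_apply, ite_and,
        Finset.sum_ite_irrel]
    · simp only [reducedLap, splitLeafEquiv, Equiv.coe_fn_mk, submatrix_apply, fromBlocks_apply₂₂,
        Matrix.add_apply, lap_apply_eq_lap_induce_compl_singleton_add W ⟨x, hxu⟩ ⟨y, hyu⟩]
      congr 1
      have hFAF : (Fᵀ * W s(u, w) * F) (⟨⟨x, hxu⟩, hxv⟩, i) (⟨⟨y, hyu⟩, hyv⟩, j) =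
          if x = w ∧ y = w then W s(u, w) i j else 0 := by
        by_cases hx : x = w <;> by_cases hy : y = w <;>
          simp [F, mul_apply, ite_and, hx, hy]
      rw [hFAF]
      by_cases hx : x = w
      · subst hx
        by_cases hy : y = x
        · simp [hy, G.adj_comm _ u, hu, Sym2.eq_swap]
        · simp [hy, Ne.symm hy]
      · simp [hx, G.adj_comm _ u, hu]
  rw [← det_submatrix_equiv_self (splitLeafEquiv huv), hblocks,
    Matrix.det_fromBlocks_mul_mul_add]

end LeafRemoval

theorem det_reducedLap_of_isTree {V : Type*} [Fintype V] [DecidableEq V] {G : SimpleGraph V}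
    (hT : G.IsTree) {d : ℕ} (W : Sym2 V → Matrix (Fin d) (Fin d) ℝ) (v : V) :
    (reducedLap G d W v).det = ∏ e ∈ G.edgeFinset, (W e).det := by
  refine Fintype.induction_subsingleton_or_nontrivial (P := fun V _ => ∀ [DecidableEq V]
    (G : SimpleGraph V), G.IsTree → ∀ (W : Sym2 V → Matrix (Fin d) (Fin d) ℝ) (v : V),
      (reducedLap G d W v).det = ∏ e ∈ G.edgeFinset, (W e).det) V ?_ ?_ G hT W v
  · intro V _ _ _ G _ W v
    have : IsEmpty {x // x ≠ v} := ⟨fun x => x.2 (Subsingleton.elim _ _)⟩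
    simp [edgeFinset_eq_empty.mpr (Subsingleton.elim G ⊥)]
  · intro V _ _ ih _ G hT W v
    obtain ⟨u, hdeg, huv⟩ := hT.exists_degree_eq_one_ne v
    obtain ⟨w, hw, hw_unique⟩ := degree_eq_one_iff_existsUnique_adj.mp hdeg
    rw [det_reducedLap_eq_det_mul_det_reducedLap_induce W (fun x => ⟨hw_unique x, (· ▸ hw)⟩) huv,
      ih _ (Fintype.card_subtype_lt (x := u) (by simp)) _
        (hT.induce_compl_singleton_of_degree_eq_one hdeg),
      G.prod_edgeFinset_eq_prod_incidenceFinset_mul _ u, incidenceFinset_eq_singleton hdeg hw,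
      Finset.prod_singleton]
    rfl

theorem det_lap_principal_submatrix_general {V : Type*} [Fintype V] [DecidableEq V]
    (G : SimpleGraph V) (hT : G.IsTree) (d : ℕ)
    (W : Sym2 V → Matrix (Fin d) (Fin d) ℝ) (v : V) :
    ((lap G d W).submatrix
        (fun p : {x : V // x ≠ v} × Fin d => ((p.1 : V), p.2))
        (fun p : {x : V // x ≠ v} × Fin d => ((p.1 : V), p.2))).det =
      ∏ e ∈ G.edgeFinset, (W e).det :=
  det_reducedLap_of_isTree hT W v

/-- For a tree with nonsingular matrix edge weights, the determinant of the principal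
submatrix of the Laplacian obtained by deleting the row and column blocks of a vertex `v`
is the product of the determinants of all the edge weights. -/
theorem det_lap_principal_submatrix {V : Type*} [Fintype V] [DecidableEq V]
    (G : SimpleGraph V) (hT : G.IsTree) (d : ℕ)
    (W : Sym2 V → Matrix (Fin d) (Fin d) ℝ)
    (hW : ∀ e ∈ G.edgeSet, IsUnit (W e)) (v : V) :
    ((lap G d W).submatrix
        (fun p : {x : V // x ≠ v} × Fin d => ((p.1 : V), p.2))
        (fun p : {x : V // x ≠ v} × Fin d => ((p.1 : V), p.2))).det =
      ∏ e ∈ G.edgeFinset, (W e).det :=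
  det_lap_principal_submatrix_general G hT d W v
end

section
/- Let T be a tree with positive definite s×s matrix edge weights, with oriented incidence matrix Q (whose (u,e) block is ±√(W(e)) for the endpoints of e and 0 otherwise). For any vertex v, the matrix Q_v obtained by deleting the row block of v is invertible, and Q_v⁻¹ equals the path matrix P_v whose column block at vertex u ≠ v is the incidence block vector of the path from u to v (entries ±(√(W(e)))⁻¹ for edges e on the path, with sign according to orientation, and 0 otherwise). -/
/-!
Blockwise, `Q_v` is the `±1` incidence matrix `N` of the tree (row `v` deleted) with column
block `e` multiplied by `√W(e)`, and `P_v` is the signed path matrix `S` (column `w` records the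
path from `w` to `v`) with row block `e` multiplied by `√W(e)⁻¹`. The weights cancel, so
`Q_v P_v = (N S) ⊗ I`. Along the path from `w` to `v` the incidence columns telescope to
`e_w - e_v`, and row `v` is deleted, so `N S = I`. A tree has `n - 1` edges, so `Q_v` is square
and `P_v` is also a left inverse.
-/

open scoped Classical
open Matrix

/-- The unique path in a tree between two vertices. -/
noncomputable def pathWalk {V : Type*} {G : SimpleGraph V} (hT : G.IsTree) (u v : V) :
    G.Walk u v := (hT.existsUnique_path u v).choose

/-- The list of edges of the unique path between two vertices of a tree. -/
noncomputable def pathEdges {V : Type*} {G : SimpleGraph V} (hT : G.IsTree) (u v : V) :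
    List (Sym2 V) := (pathWalk hT u v).edges

open scoped Kronecker

namespace Matrix

variable {l m n ι κ μ α : Type*}

def weightCols [Mul α] (A : Matrix l m α) (X : m → Matrix ι κ α) : Matrix (l × ι) (m × κ) α :=
  of fun p q => A p.1 q.1 * X q.1 p.2 q.2

def weightRows [Mul α] (B : Matrix m n α) (Y : m → Matrix κ μ α) : Matrix (m × κ) (n × μ) α :=
  of fun p q => B p.1 q.1 * Y p.1 p.2 q.2

theorem weightCols_mul_weightRows [Fintype m] [Fintype κ] [DecidableEq ι] [CommSemiring α]
    (A : Matrix l m α) (B : Matrix m n α) {X : m → Matrix ι κ α} {Y : m → Matrix κ ι α}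
    (hXY : ∀ e, X e * Y e = 1) :
    weightCols A X * weightRows B Y = (A * B) ⊗ₖ (1 : Matrix ι ι α) := by
  ext ⟨a, i⟩ ⟨c, j⟩
  have hblock (e : m) :
      ∑ k, A a e * X e i k * (B e c * Y e k j) = A a e * B e c * (1 : Matrix ι ι α) i j := by
    rw [← hXY e, mul_apply, Finset.mul_sum]
    exact Finset.sum_congr rfl fun k _ => by ring
  simp only [weightCols, weightRows, mul_apply, Fintype.sum_prod_type, of_apply, hblock,
    kronecker_apply, Finset.sum_mul]

end Matrix

namespace SimpleGraph

variable {V : Type*} {G : SimpleGraph V}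

theorem IsAcyclic.length_eq_dist_of_isPath (hG : G.IsAcyclic) {u v : V} {p : G.Walk u v}
    (hp : p.IsPath) : p.length = G.dist u v := by
  obtain ⟨q, hq, hq_len⟩ := p.reachable.exists_path_of_dist
  have : (⟨p, hp⟩ : G.Path u v) = ⟨q, hq⟩ := (hG.subsingleton_path u v).elim _ _
  rw [← hq_len, show p = q from congrArg Subtype.val this]

theorem IsAcyclic.dist_eq_dist_add_one_of_isPath_cons (hG : G.IsAcyclic) {w x v y : V}
    (h : G.Adj w x) {q : G.Walk x v} (hp : (Walk.cons h q).IsPath) (hy : y ∈ q.support) :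
    G.dist w y = G.dist x y + 1 := by
  have hq := (Walk.cons_isPath_iff h q).1 hp
  have hw : w ∉ (q.takeUntil y hy).support :=
    fun hw => hq.2 (q.support_takeUntil_subset_support hy hw)
  have hr := hq.1.takeUntil hy
  rw [← hG.length_eq_dist_of_isPath (hr.cons (h := h) hw), ← hG.length_eq_dist_of_isPath hr,
    Walk.length_cons]

theorem IsTree.card_edgeSet_eq_card_ne [Fintype V] [DecidableEq V] [Fintype G.edgeSet]
    (hG : G.IsTree) (v : V) : Fintype.card G.edgeSet = Fintype.card {x : V // x ≠ v} := by
  have := hG.card_edgeFinset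
  rw [edgeFinset, Set.toFinset_card] at this
  rw [Fintype.card_subtype_compl, Fintype.card_subtype_eq]
  omega

end SimpleGraph

theorem pathWalk_isPath {V : Type*} {G : SimpleGraph V} (hT : G.IsTree) (u v : V) :
    (pathWalk hT u v).IsPath :=
  (hT.existsUnique_path u v).choose_spec.1

noncomputable section Orientation

variable {V : Type*} (α : Type*) [Ring α] (init term : Sym2 V → V)

def orientedIncidence [DecidableEq V] : Matrix V (Sym2 V) α :=
  of fun u e => if u = init e then 1 else if u = term e then -1 else 0

/-- On a path from `w` through `e` in a tree, this is `1` exactly when the path crosses `e` from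
`init e` to `term e`. -/
def crossingSign (G : SimpleGraph V) (w : V) (e : Sym2 V) : α :=
  if G.dist w (init e) < G.dist w (term e) then 1 else -1

def pathSignMatrix [DecidableEq V] {G : SimpleGraph V} (hT : G.IsTree) (v : V) :
    Matrix (Sym2 V) V α :=
  of fun e w => if e ∈ pathEdges hT w v then crossingSign α init term G w e else 0

variable {α init term} {G : SimpleGraph V}

theorem orientedIncidence_mul_crossingSign_of_adj [DecidableEq V]
    (horient : ∀ e ∈ G.edgeSet, e = s(init e, term e)) {w x : V} (h : G.Adj w x) (u : V) :
    orientedIncidence α init term u s(w, x) * crossingSign α init term G w s(w, x) =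
      (if u = w then 1 else 0) - (if u = x then 1 else 0) := by
  have hdist : G.dist w w < G.dist w x := by
    rw [SimpleGraph.dist_self, SimpleGraph.dist_eq_one_iff_adj.2 h]
    exact Nat.one_pos
  have hwx := h.ne
  simp only [orientedIncidence, crossingSign, of_apply]
  rcases Sym2.eq_iff.1 (horient _ h) with ⟨hw, hx⟩ | ⟨hx, hw⟩
  · rw [← hw, ← hx, if_pos hdist]
    split_ifs <;> grind
  · rw [← hw, ← hx, if_neg hdist.not_gt]
    split_ifs <;> grind

theorem crossingSign_eq_of_isPath_cons (horient : ∀ e ∈ G.edgeSet, e = s(init e, term e))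
    (hG : G.IsAcyclic) {w x v : V} (h : G.Adj w x) {q : G.Walk x v}
    (hp : (SimpleGraph.Walk.cons h q).IsPath) {e : Sym2 V} (he : e ∈ q.edges) :
    crossingSign α init term G w e = crossingSign α init term G x e := by
  have he' : s(init e, term e) ∈ q.edges := horient e (q.edges_subset_edgeSet he) ▸ he
  simp only [crossingSign, Nat.add_lt_add_iff_right,
    hG.dist_eq_dist_add_one_of_isPath_cons h hp (q.fst_mem_support_of_mem_edges he'),
    hG.dist_eq_dist_add_one_of_isPath_cons h hp (q.snd_mem_support_of_mem_edges he')]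

theorem sum_orientedIncidence_mul_crossingSign [DecidableEq V]
    (horient : ∀ e ∈ G.edgeSet, e = s(init e, term e)) (hG : G.IsAcyclic) (u : V)
    {w v : V} (p : G.Walk w v) (hp : p.IsPath) :
    (p.edges.map fun e => orientedIncidence α init term u e * crossingSign α init term G w e).sum =
      (if u = w then 1 else 0) - (if u = v then 1 else 0) := by
  induction p with
  | nil => simp
  | cons h q ih =>
    rw [SimpleGraph.Walk.edges_cons, List.map_cons, List.sum_cons,
      List.map_congr_left fun e he => by
        rw [crossingSign_eq_of_isPath_cons horient hG h hp he],
      ih hp.of_cons, orientedIncidence_mul_crossingSign_of_adj horient h]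
    abel

theorem sum_orientedIncidence_mul_pathSignMatrix [DecidableEq V] [Fintype G.edgeSet]
    (horient : ∀ e ∈ G.edgeSet, e = s(init e, term e)) (hT : G.IsTree) (u w v : V) :
    ∑ e : G.edgeSet, orientedIncidence α init term u e * pathSignMatrix α init term hT v e w =
      (if u = w then 1 else 0) - (if u = v then 1 else 0) := by
  have hsub : (pathEdges hT w v).toFinset ⊆ G.edgeSet.toFinset := fun e he => by
    simpa using (pathWalk hT w v).edges_subset_edgeSet (List.mem_toFinset.1 he)
  have hoff : ∀ e ∈ G.edgeSet.toFinset, e ∉ (pathEdges hT w v).toFinset →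
      orientedIncidence α init term u e * pathSignMatrix α init term hT v e w = 0 :=
    fun e _ he => by simp [pathSignMatrix, List.mem_toFinset.not.1 he]
  rw [Finset.sum_set_coe (f := fun e => orientedIncidence α init term u e *
      pathSignMatrix α init term hT v e w), ← Finset.sum_subset hsub hoff,
    List.sum_toFinset (l := pathEdges hT w v) _ (pathWalk_isPath hT w v).edges_nodup,
    List.map_congr_left (g := fun e => orientedIncidence α init term u e *
      crossingSign α init term G w e) fun e he => by
        simp only [pathSignMatrix, of_apply, if_pos he]]
  exact sum_orientedIncidence_mul_crossingSign horient hT.isAcyclic u _ (pathWalk_isPath hT w v)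

theorem orientedIncidence_mul_pathSignMatrix_eq_one [DecidableEq V] [Fintype G.edgeSet]
    (horient : ∀ e ∈ G.edgeSet, e = s(init e, term e)) (hT : G.IsTree) (v : V) :
    (orientedIncidence α init term).submatrix (Subtype.val : {x // x ≠ v} → V)
        (Subtype.val : G.edgeSet → Sym2 V) *
      (pathSignMatrix α init term hT v).submatrix (Subtype.val : G.edgeSet → Sym2 V)
        (Subtype.val : {x // x ≠ v} → V) = 1 := by
  ext ⟨u, hu⟩ ⟨w, hw⟩
  simp only [mul_apply, submatrix_apply]
  rw [sum_orientedIncidence_mul_pathSignMatrix horient hT, if_neg hu, sub_zero, one_apply]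
  simp [Subtype.ext_iff]

end Orientation

theorem incidence_inv_eq_path_matrix_general {V : Type*} [Fintype V] [DecidableEq V]
    (G : SimpleGraph V) (hT : G.IsTree) (d : ℕ)
    (W R : Sym2 V → Matrix (Fin d) (Fin d) ℝ)
    (init term : Sym2 V → V)
    (horient : ∀ e ∈ G.edgeSet, e = Sym2.mk (init e) (term e))
    (hR : ∀ e ∈ G.edgeSet, (R e).PosDef ∧ R e * R e = W e)
    (v : V) :
    letI Qv : Matrix ({x : V // x ≠ v} × Fin d) (↥G.edgeSet × Fin d) ℝ :=
      Matrix.of fun p q =>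
        if (p.1 : V) = init (q.1 : Sym2 V) then R (q.1 : Sym2 V) p.2 q.2
        else if (p.1 : V) = term (q.1 : Sym2 V) then -(R (q.1 : Sym2 V)) p.2 q.2
        else 0
    letI Pv : Matrix (↥G.edgeSet × Fin d) ({x : V // x ≠ v} × Fin d) ℝ :=
      Matrix.of fun q p =>
        if (q.1 : Sym2 V) ∈ pathEdges hT (p.1 : V) v then
          (if G.dist (p.1 : V) (init (q.1 : Sym2 V)) <
              G.dist (p.1 : V) (term (q.1 : Sym2 V)) then
            (R (q.1 : Sym2 V))⁻¹ q.2 p.2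
          else -((R (q.1 : Sym2 V))⁻¹) q.2 p.2)
        else 0
    Qv * Pv = 1 ∧ Pv * Qv = 1 := by
  set N := (orientedIncidence ℝ init term).submatrix (Subtype.val : {x // x ≠ v} → V)
    (Subtype.val : G.edgeSet → Sym2 V)
  set S := (pathSignMatrix ℝ init term hT v).submatrix (Subtype.val : G.edgeSet → Sym2 V)
    (Subtype.val : {x // x ≠ v} → V)
  suffices h : ∀ Qv Pv, Qv = weightCols N (fun e : G.edgeSet => R e) →
      Pv = weightRows S (fun e : G.edgeSet => (R e)⁻¹) → Qv * Pv = 1 ∧ Pv * Qv = 1 by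
    refine h _ _ ?_ ?_ <;> ext
    · simp only [N, weightCols, orientedIncidence, of_apply, submatrix_apply]
      split_ifs <;> simp
    · simp only [S, weightRows, pathSignMatrix, crossingSign, of_apply, submatrix_apply]
      split_ifs <;> simp
  rintro Qv Pv rfl rfl
  have hR_inv (e : G.edgeSet) : R e * (R e)⁻¹ = 1 :=
    mul_nonsing_inv _ (isUnit_iff_ne_zero.2 (hR e e.2).1.det_pos.ne')
  have hQP : weightCols N (fun e : G.edgeSet => R e) * weightRows S (fun e => (R e)⁻¹) = 1 := by
    rw [weightCols_mul_weightRows _ _ hR_inv,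
      orientedIncidence_mul_pathSignMatrix_eq_one horient hT, one_kronecker_one]
  have hsquare := (Fintype.equivOfCardEq (hT.card_edgeSet_eq_card_ne v).symm).prodCongr
    (Equiv.refl (Fin d))
  exact ⟨hQP, (mul_eq_one_comm_of_equiv hsquare).1 hQP⟩

/-- For a tree with positive definite matrix edge weights and an orientation of its edges
(given by `init` and `term`), with `R e` the positive definite square root of the weight
`W e`: the incidence matrix `Q_v` with the row block of `v` deleted is invertible, with
inverse the path matrix `P_v`. -/
theorem incidence_inv_eq_path_matrix {V : Type*} [Fintype V] [DecidableEq V]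
    (G : SimpleGraph V) (hT : G.IsTree) (d : ℕ)
    (W R : Sym2 V → Matrix (Fin d) (Fin d) ℝ)
    (init term : Sym2 V → V)
    (horient : ∀ e ∈ G.edgeSet, e = Sym2.mk (init e) (term e))
    (hW : ∀ e ∈ G.edgeSet, (W e).PosDef)
    (hR : ∀ e ∈ G.edgeSet, (R e).PosDef ∧ R e * R e = W e)
    (v : V) :
    letI Qv : Matrix ({x : V // x ≠ v} × Fin d) (↥G.edgeSet × Fin d) ℝ :=
      Matrix.of fun p q =>
        if (p.1 : V) = init (q.1 : Sym2 V) then R (q.1 : Sym2 V) p.2 q.2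
        else if (p.1 : V) = term (q.1 : Sym2 V) then -(R (q.1 : Sym2 V)) p.2 q.2
        else 0
    letI Pv : Matrix (↥G.edgeSet × Fin d) ({x : V // x ≠ v} × Fin d) ℝ :=
      Matrix.of fun q p =>
        if (q.1 : Sym2 V) ∈ pathEdges hT (p.1 : V) v then
          (if G.dist (p.1 : V) (init (q.1 : Sym2 V)) <
              G.dist (p.1 : V) (term (q.1 : Sym2 V)) then
            (R (q.1 : Sym2 V))⁻¹ q.2 p.2
          else -((R (q.1 : Sym2 V))⁻¹) q.2 p.2)
        else 0
    Qv * Pv = 1 ∧ Pv * Qv = 1 :=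
  incidence_inv_eq_path_matrix_general G hT d W R init term horient hR v
end

section
/- Let T be a tree on n vertices with nonsingular s×s matrix edge weights and Laplacian L. Then I_{ns} - L L⁺ = Jₙ ⊗ (1/n) I_s, where L⁺ is the Moore-Penrose inverse of L. -/
open scoped Classical
open Matrix

/-!
Write `P = 1 - L L⁺` and `Q = Jₙ ⊗ (1/n) I`. Since `L L⁺ L = L` and `P` is symmetric,
`Lᵀ P = (P L)ᵀ = 0`, and `Lᵀ` is the Laplacian of the same tree with the transposed (still
invertible) weights. On a tree with invertible weights a kernel vector `x` of the Laplacian has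
`x_a = x_b` along every edge `ab`: summing `L x` over the side of `a` of the bridge `ab`, all
inner edge terms cancel and only `W_ab (x_a - x_b)` is left. So the columns of `P` are constant
across vertices and `Q P = P`. On the other hand the block column sums of `L` vanish, so
`Q L = 0` and `Q P = Q`.
-/

open Function (curry)

theorem Finset.sum_sum_eq_zero_of_antisymm {ι M : Type*} [AddCommGroup M] [IsAddTorsionFree M]
    (s : Finset ι) (f : ι → ι → M) (hf : ∀ i j, f j i = -f i j) :
    ∑ i ∈ s, ∑ j ∈ s, f i j = 0 := by
  refine self_eq_neg.mp ?_
  calc ∑ i ∈ s, ∑ j ∈ s, f i j = ∑ i ∈ s, ∑ j ∈ s, f j i := Finset.sum_comm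
    _ = -∑ i ∈ s, ∑ j ∈ s, f i j := by
      simp only [← Finset.sum_neg_distrib]
      exact Finset.sum_congr rfl fun i _ => Finset.sum_congr rfl fun j _ => hf i j

section
variable {V : Type*} [Fintype V] (G : SimpleGraph V) (d : ℕ)
  (W : Sym2 V → Matrix (Fin d) (Fin d) ℝ)

theorem lap_apply (v u : V) (i j : Fin d) :
    lap G d W (v, i) (u, j) =
      (if v = u then (∑ t ∈ G.neighborFinset v, W s(v, t)) i j else 0) -
        if G.Adj v u then W s(v, u) i j else 0 := by
  by_cases h : v = u
  · subst h; simp [lap]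
  · by_cases hadj : G.Adj v u <;> simp [lap, h, hadj]

theorem curry_lap_mulVec (x : V × Fin d → ℝ) (v : V) :
    curry (lap G d W *ᵥ x) v =
      ∑ u ∈ G.neighborFinset v, W s(v, u) *ᵥ (curry x v - curry x u) := by
  simp only [mulVec_sub, Finset.sum_sub_distrib, ← sum_mulVec]
  ext i
  simp only [Function.curry_apply, Pi.sub_apply, Finset.sum_apply, mulVec, dotProduct,
    Fintype.sum_prod_type, lap_apply, sub_mul, Finset.sum_sub_distrib, ite_mul, zero_mul]
  simp [Finset.sum_ite_eq, ← Finset.sum_filter, SimpleGraph.neighborFinset_eq_filter]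

theorem sum_lap_apply_left (w : V) (i j : Fin d) : ∑ v, lap G d W (v, i) (w, j) = 0 := by
  simp [lap_apply, Finset.sum_sub_distrib, Matrix.sum_apply, ← Finset.sum_filter,
    SimpleGraph.neighborFinset_eq_filter, SimpleGraph.adj_comm, Sym2.eq_swap]

theorem lap_transpose : (lap G d W)ᵀ = lap G d fun e => (W e)ᵀ := by
  ext ⟨v, i⟩ ⟨u, j⟩
  by_cases h : u = v
  · subst h; simp [lap_apply, Matrix.sum_apply]
  · simp [lap_apply, h, Ne.symm h, SimpleGraph.adj_comm, Sym2.eq_swap]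

theorem sum_curry_lap_mulVec_eq_sum_cut (x : V × Fin d → ℝ) (A : Finset V) :
    ∑ p ∈ A, curry (lap G d W *ᵥ x) p =
      ∑ p ∈ A, ∑ u ∈ G.neighborFinset p with u ∉ A,
        W s(p, u) *ᵥ (curry x p - curry x u) := by
  set f : V → V → Fin d → ℝ := fun p u => W s(p, u) *ᵥ (curry x p - curry x u)
  have hf : ∀ p u, f u p = -f p u := fun p u => by
    simp only [f, Sym2.eq_swap, ← mulVec_neg, neg_sub]
  have h_inner : ∑ p ∈ A, ∑ u ∈ G.neighborFinset p with u ∈ A, f p u = 0 := by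
    have h_nbr : ∀ p, {u ∈ G.neighborFinset p | u ∈ A} = {u ∈ A | G.Adj p u} := fun p => by
      ext u; simp [and_comm]
    simp only [h_nbr, Finset.sum_filter]
    refine Finset.sum_sum_eq_zero_of_antisymm A _ fun p u => ?_
    by_cases h : G.Adj p u
    · rw [if_pos h, if_pos h.symm, hf]
    · simp [h, mt G.adj_symm h]
  calc ∑ p ∈ A, curry (lap G d W *ᵥ x) p
        = ∑ p ∈ A, ∑ u ∈ G.neighborFinset p, f p u := by
        simp only [curry_lap_mulVec, f]
    _ = ∑ p ∈ A, (∑ u ∈ G.neighborFinset p with u ∈ A, f p u +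
          ∑ u ∈ G.neighborFinset p with u ∉ A, f p u) := by
        simp only [Finset.sum_filter_add_sum_filter_not]
    _ = _ := by rw [Finset.sum_add_distrib, h_inner, zero_add]

theorem mulVec_curry_sub_eq_zero_of_isBridge {x : V × Fin d → ℝ} (hx : lap G d W *ᵥ x = 0)
    {a b : V} (hab : G.Adj a b) (hbr : G.IsBridge s(a, b)) :
    W s(a, b) *ᵥ (curry x a - curry x b) = 0 := by
  set A : Finset V := {u | (G.deleteEdges {s(a, b)}).Reachable a u}
  have ha : a ∈ A := by simp [A]
  have hb : b ∉ A := by simpa [A] using SimpleGraph.isBridge_iff.mp hbr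
  have h_cut : ∀ p ∈ A, ∀ u, G.Adj p u → u ∉ A → p = a ∧ u = b := by
    intro p hp u hpu hu
    have h_edge : s(p, u) = s(a, b) := by
      by_contra hne
      simp only [A, Finset.mem_filter, Finset.mem_univ, true_and] at hp hu
      exact hu (hp.trans (SimpleGraph.deleteEdges_adj.mpr ⟨hpu, hne⟩).reachable)
    rcases Sym2.eq_iff.mp h_edge with h | ⟨rfl, rfl⟩
    · exact h
    · exact absurd hp hb
  have h_nbr : ∀ p ∈ A, {u ∈ G.neighborFinset p | u ∉ A} = if p = a then {b} else ∅ := by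
    intro p hp
    ext u
    simp only [Finset.mem_filter, SimpleGraph.mem_neighborFinset]
    split_ifs with hpa
    · rw [Finset.mem_singleton]
      refine ⟨fun ⟨hpu, hu⟩ => (h_cut p hp u hpu hu).2, ?_⟩
      rintro rfl
      exact ⟨hpa ▸ hab, hb⟩
    · simp only [Finset.notMem_empty, iff_false, not_and]
      exact fun hpu hu => hpa (h_cut p hp u hpu hu).1
  symm
  calc (0 : Fin d → ℝ) = ∑ p ∈ A, curry (lap G d W *ᵥ x) p := by
        rw [hx]; exact (Finset.sum_eq_zero fun _ _ => rfl).symm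
    _ = ∑ p ∈ A, ∑ u ∈ G.neighborFinset p with u ∉ A,
          W s(p, u) *ᵥ (curry x p - curry x u) :=
        sum_curry_lap_mulVec_eq_sum_cut G d W x A
    _ = ∑ p ∈ A, ∑ u ∈ (if p = a then {b} else ∅),
          W s(p, u) *ᵥ (curry x p - curry x u) :=
        Finset.sum_congr rfl fun p hp => by rw [h_nbr p hp]
    _ = _ := by
        rw [Finset.sum_eq_single_of_mem a ha fun p _ hpa => by simp [hpa]]
        simp

theorem curry_eq_of_lap_mulVec_eq_zero (hG : G.IsTree) (hW : ∀ e ∈ G.edgeSet, IsUnit (W e))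
    {x : V × Fin d → ℝ} (hx : lap G d W *ᵥ x = 0) (v w : V) :
    curry x v = curry x w := by
  have h_adj : ∀ a b, G.Adj a b → curry x a = curry x b := fun a b hab =>
    sub_eq_zero.mp <| mulVec_injective_of_isUnit (hW _ hab) <| by
      rw [mulVec_zero]
      exact mulVec_curry_sub_eq_zero_of_isBridge G d W hx hab
        (SimpleGraph.isAcyclic_iff_forall_adj_isBridge.mp hG.isAcyclic hab)
  obtain ⟨p⟩ := hG.connected.preconnected v w
  induction p with
  | nil => rfl
  | cons h _ ih => exact (h_adj _ _ h).trans ih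

theorem apply_eq_of_lap_mul_eq_zero (hG : G.IsTree) (hW : ∀ e ∈ G.edgeSet, IsUnit (W e))
    {κ : Type*} {M : Matrix (V × Fin d) κ ℝ} (hM : lap G d W * M = 0) (u v : V) (i : Fin d)
    (q : κ) : M (u, i) q = M (v, i) q :=
  congrFun (curry_eq_of_lap_mulVec_eq_zero G d W hG hW (x := fun p => M p q)
    (funext fun p => congrFun (congrFun hM p) q) u v) i

end

theorem of_ite_snd_eq_mul_apply {α ι κ R : Type*} [Fintype α] [Fintype ι] [DecidableEq ι]
    [NonUnitalNonAssocSemiring R] (c : R) (M : Matrix (α × ι) κ R) (p : α × ι) (q : κ) :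
    ((of fun p q : α × ι => if p.2 = q.2 then c else 0) * M) p q = c * ∑ a, M (a, p.2) q := by
  simp [mul_apply, Fintype.sum_prod_type, Finset.mul_sum]

theorem one_sub_lap_mul_pinv_general {V : Type*} [Fintype V] [DecidableEq V]
    (G : SimpleGraph V) (hT : G.IsTree) (d : ℕ)
    (W : Sym2 V → Matrix (Fin d) (Fin d) ℝ)
    (hW : ∀ e ∈ G.edgeSet, IsUnit (W e))
    (Lp : Matrix (V × Fin d) (V × Fin d) ℝ)
    (h1 : lap G d W * Lp * lap G d W = lap G d W)
    (h3 : (lap G d W * Lp)ᵀ = lap G d W * Lp) :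
    1 - lap G d W * Lp =
      Matrix.of fun p q : V × Fin d =>
        if p.2 = q.2 then (1 : ℝ) / (Fintype.card V) else 0 := by
  set L := lap G d W
  set P := 1 - L * Lp
  set Q : Matrix (V × Fin d) (V × Fin d) ℝ :=
    of fun p q => if p.2 = q.2 then (1 : ℝ) / (Fintype.card V) else 0
  have hPL : P * L = 0 := by rw [sub_mul, one_mul, h1, sub_self]
  have hQL : Q * L = 0 := by
    ext p ⟨w, j⟩
    rw [of_ite_snd_eq_mul_apply, sum_lap_apply_left, mul_zero, Matrix.zero_apply]
  have hLtP : lap G d (fun e => (W e)ᵀ) * P = 0 := by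
    have hP : Pᵀ = P := by rw [transpose_sub, transpose_one, h3]
    rw [← lap_transpose, ← hP, ← transpose_mul, hPL, transpose_zero]
  have hP_col : ∀ u v i q, P (u, i) q = P (v, i) q := apply_eq_of_lap_mul_eq_zero G d _ hT
    (fun e he => (isUnit_transpose _).mpr (hW e he)) hLtP
  have : Nonempty V := hT.connected.nonempty
  have hn : (Fintype.card V : ℝ) ≠ 0 := Nat.cast_ne_zero.mpr Fintype.card_ne_zero
  calc P = Q * P := by
        ext p q
        simp [Q, of_ite_snd_eq_mul_apply, hP_col _ p.1, hn]
    _ = Q := by rw [mul_sub, mul_one, ← mul_assoc, hQL, zero_mul, sub_zero]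

/-- For a tree on `n` vertices with nonsingular `d × d` matrix edge weights and Laplacian `L`
with Moore–Penrose inverse `L⁺`, one has `I - L L⁺ = Jₙ ⊗ (1/n) I_d`. -/
theorem one_sub_lap_mul_pinv {V : Type*} [Fintype V] [DecidableEq V]
    (G : SimpleGraph V) (hT : G.IsTree) (d : ℕ)
    (W : Sym2 V → Matrix (Fin d) (Fin d) ℝ)
    (hW : ∀ e ∈ G.edgeSet, IsUnit (W e))
    (Lp : Matrix (V × Fin d) (V × Fin d) ℝ)
    (h1 : lap G d W * Lp * lap G d W = lap G d W)
    (h2 : Lp * lap G d W * Lp = Lp)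
    (h3 : (lap G d W * Lp)ᵀ = lap G d W * Lp)
    (h4 : (Lp * lap G d W)ᵀ = Lp * lap G d W) :
    1 - lap G d W * Lp =
      Matrix.of fun p q : V × Fin d =>
        if p.2 = q.2 then (1 : ℝ) / (Fintype.card V) else 0 :=
  one_sub_lap_mul_pinv_general G hT d W hW Lp h1 h3
end

section
/- Let T = (V,E) be a tree with lower triangular s×s matrix edge weights with positive diagonal entries, and let v be a vertex with a branch B at v. If M_v(B) is the bottleneck matrix of B in T and M_v^{(j)}(B) is the bottleneck matrix of B in the induced positively weighted tree T^{(j)} (with edge weights the j-th diagonal entries w_{jj}(e)), then σ(M_v(B)) = ⋃_{j=1}^{s} σ(M_v^{(j)}(B)) and ρ(M_v(B)) = max_{1 ≤ j ≤ s} ρ(M_v^{(j)}(B)). -/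
/-!
Every `W e` is lower triangular with diagonal entries `w_jj(e)`, hence so is `(W e)⁻¹`, with
diagonal entries `1 / w_jj(e)`. Ordering the rows and columns of `M_v(B)` by the second
coordinate of `B × Fin s` therefore makes `M_v(B)` block lower triangular, and its `j`-th
diagonal block is exactly `M_v^{(j)}(B)`. So `det (μ - M_v(B)) = ∏ j, det (μ - M_v^{(j)}(B))`,
which gives the spectrum, and the spectral radius of a finite union of spectra is the largest of
the spectral radii.
-/

open scoped Classical
open Matrix

/-- The spectral radius of a real square matrix. -/
noncomputable def sRad {ι : Type*} [Fintype ι] [DecidableEq ι] (A : Matrix ι ι ℝ) : ℝ :=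
  sSup {r : ℝ | ∃ μ ∈ spectrum ℂ (A.map (fun x : ℝ => (x : ℂ))), r = ‖μ‖}

/-- The branch `B_x(y)`: the set of vertices of the component of `T - x` containing `y`. -/
def branch {V : Type*} {G : SimpleGraph V} (hT : G.IsTree) (x y : V) : Set V :=
  {a | a ≠ x ∧ x ∉ (pathWalk hT a y).support}

/-- The bottleneck matrix `M_x(y)` of the branch `B_x(y)` based at `x`. -/
noncomputable def bottleneck {V : Type*} {G : SimpleGraph V} (hT : G.IsTree) (d : ℕ)
    (W : Sym2 V → Matrix (Fin d) (Fin d) ℝ) (x y : V) :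
    Matrix (↥(branch hT x y) × Fin d) (↥(branch hT x y) × Fin d) ℝ :=
  Matrix.of fun p q =>
    (∑ e ∈ (pathEdges hT (p.1 : V) x).toFinset ∩ (pathEdges hT (q.1 : V) x).toFinset,
      (W e)⁻¹) p.2 q.2

/-- The scalar bottleneck matrix of the branch `B_x(y)` in the induced positively weighted
tree `T^{(j)}` whose edge weights are the `j`-th diagonal entries of the matrix weights. -/
noncomputable def bottleneckScalar {V : Type*} {G : SimpleGraph V} (hT : G.IsTree) (d : ℕ)
    (W : Sym2 V → Matrix (Fin d) (Fin d) ℝ) (j : Fin d) (x y : V) :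
    Matrix (↥(branch hT x y)) (↥(branch hT x y)) ℝ :=
  Matrix.of fun a b =>
    ∑ e ∈ (pathEdges hT (a : V) x).toFinset ∩ (pathEdges hT (b : V) x).toFinset,
      (W e (j : Fin d) j)⁻¹

open Set OrderDual

namespace Matrix

section BlockTriangularProd

variable {R ι α β : Type*} [CommRing R] [Fintype ι] [DecidableEq ι] [Fintype α]
  [DecidableEq α]

theorem det_toSquareBlock_snd [DecidableEq β] (A : Matrix (ι × α) (ι × α) R) (e : α ≃ β)
    (j : α) :
    (A.toSquareBlock (fun p => e p.2) (e j)).det = (A.submatrix (·, j) (·, j)).det := by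
  let σ : {p : ι × α // e p.2 = e j} ≃ ι :=
    { toFun := fun p => p.1.1
      invFun := fun a => ⟨(a, j), rfl⟩
      left_inv := by rintro ⟨⟨a, k⟩, hk⟩; obtain rfl := e.injective hk; rfl
      right_inv := fun _ => rfl }
  rw [← det_submatrix_equiv_self σ]
  congr 1
  ext ⟨⟨a, k⟩, hk⟩ ⟨⟨b, l⟩, hl⟩
  obtain rfl := e.injective hk
  obtain rfl := e.injective hl
  rfl

variable [Fintype β] [LinearOrder β] {A : Matrix (ι × α) (ι × α) R} {e : α ≃ β}

theorem BlockTriangular.det_eq_prod_submatrix_snd (hA : A.BlockTriangular fun p => e p.2) :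
    A.det = ∏ j, (A.submatrix (·, j) (·, j)).det := by
  rw [hA.det_fintype, ← e.prod_comp]
  exact Finset.prod_congr rfl fun j _ => det_toSquareBlock_snd A e j

theorem BlockTriangular.spectrum_eq_iUnion_submatrix_snd (hA : A.BlockTriangular fun p => e p.2) :
    spectrum R A = ⋃ j, spectrum R (A.submatrix (·, j) (·, j)) := by
  ext μ
  have hμA : (algebraMap R _ μ - A).BlockTriangular fun p => e p.2 :=
    (blockTriangular_algebraMap μ).sub hA
  have hblock : ∀ j, (algebraMap R _ μ - A).submatrix (·, j) (·, j) =
      algebraMap R _ μ - A.submatrix (·, j) (·, j) := by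
    intro j
    ext a b
    simp [algebraMap_matrix_apply]
  simp only [spectrum.mem_iff, isUnit_iff_isUnit_det, hμA.det_eq_prod_submatrix_snd, hblock,
    IsUnit.prod_univ_iff, mem_iUnion, not_forall]

end BlockTriangularProd

variable {n : Type*} [Fintype n] [DecidableEq n]

theorem BlockTriangular.inv {R β : Type*} [CommRing R] [LinearOrder β] {M : Matrix n n R}
    {b : n → β} (hM : M.BlockTriangular b) : M⁻¹.BlockTriangular b := by
  by_cases h : IsUnit M.det
  · have := M.invertibleOfIsUnitDet h
    exact blockTriangular_inv_of_blockTriangular hM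
  · rw [nonsing_inv_apply_not_isUnit M h]
    exact blockTriangular_zero

theorem IsLowerTriangular.inv_apply_self {K : Type*} [Field K] [LinearOrder n]
    {M : Matrix n n K} (hM : M.IsLowerTriangular) (hdiag : ∀ j, M j j ≠ 0) (j : n) :
    M⁻¹ j j = (M j j)⁻¹ := by
  have hdet : IsUnit M.det := by
    rw [det_of_isLowerTriangular M hM]
    exact isUnit_iff_ne_zero.2 (Finset.prod_ne_zero_iff.2 fun j _ => hdiag j)
  have hMinv : M⁻¹.IsLowerTriangular := BlockTriangular.inv hM
  -- only the term `k = j` survives, as `M⁻¹` and `M` are both lower triangular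
  have h : (M⁻¹ * M) j j = M⁻¹ j j * M j j := by
    refine Finset.sum_eq_single j (fun k _ hk => ?_) (by simp)
    change M⁻¹ j k * M k j = 0
    rcases hk.lt_or_gt with hkj | hjk
    · rw [hM (show toDual j < toDual k from hkj), mul_zero]
    · rw [hMinv (show toDual k < toDual j from hjk), zero_mul]
  rw [nonsing_inv_mul M hdet, one_apply_eq] at h
  exact eq_inv_of_mul_eq_one_left h.symm

end Matrix

theorem isGreatest_range_sSup_of_finite {κ : Type*} [Finite κ] [Nonempty κ] {T : κ → Set ℝ}
    (hT : ∀ j, (T j).Finite) (hnonneg : ∀ j, ∀ r ∈ T j, 0 ≤ r) :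
    IsGreatest (range fun j => sSup (T j)) (sSup (⋃ j, T j)) := by
  have hfin : (⋃ j, T j).Finite := finite_iUnion hT
  have hle : ∀ j, sSup (T j) ≤ sSup (⋃ j, T j) := by
    intro j
    rcases (T j).eq_empty_or_nonempty with h | h
    -- `sSup ∅ = 0` in `ℝ`, which is where nonnegativity is needed
    · rw [h, Real.sSup_empty]
      exact Real.sSup_nonneg fun r hr => by
        obtain ⟨i, hi⟩ := mem_iUnion.1 hr
        exact hnonneg i r hi
    · exact csSup_le_csSup hfin.bddAbove h (subset_iUnion T j)
  refine ⟨?_, forall_mem_range.2 hle⟩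
  rcases (⋃ j, T j).eq_empty_or_nonempty with h | h
  · obtain ⟨j⟩ := ‹Nonempty κ›
    have hj : T j = ∅ := subset_empty_iff.1 (h ▸ subset_iUnion T j)
    exact ⟨j, show sSup (T j) = _ by rw [hj, h]⟩
  · obtain ⟨j, hj⟩ := mem_iUnion.1 (h.csSup_mem hfin)
    exact ⟨j, (hle j).antisymm (le_csSup (hT j).bddAbove hj)⟩

theorem sRad_eq_sSup_norm_image {ι : Type*} [Fintype ι] [DecidableEq ι] (A : Matrix ι ι ℝ) :
    sRad A = sSup (norm '' spectrum ℂ (A.map fun x : ℝ => (x : ℂ))) := by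
  simp only [sRad, image, eq_comm]

theorem isGreatest_sRad_of_spectrum_eq_iUnion {κ ι ι' : Type*} [Finite κ] [Nonempty κ]
    [Fintype ι] [DecidableEq ι] [Fintype ι'] [DecidableEq ι'] {A : Matrix ι ι ℝ}
    {S : κ → Matrix ι' ι' ℝ}
    (h : spectrum ℂ (A.map fun x : ℝ => (x : ℂ)) =
      ⋃ j, spectrum ℂ ((S j).map fun x : ℝ => (x : ℂ))) :
    IsGreatest (range fun j => sRad (S j)) (sRad A) := by
  simp only [sRad_eq_sSup_norm_image, h, image_iUnion]
  refine isGreatest_range_sSup_of_finite (fun j => (finite_spectrum _).image _) ?_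
  rintro j _ ⟨μ, -, rfl⟩
  exact norm_nonneg μ

section Tree

variable {V : Type*} {G : SimpleGraph V} (hT : G.IsTree)

theorem mem_edgeSet_of_mem_pathEdges {a x : V} {e : Sym2 V} (he : e ∈ pathEdges hT a x) :
    e ∈ G.edgeSet :=
  (pathWalk hT a x).edges_subset_edgeSet he

variable {d : ℕ} {W : Sym2 V → Matrix (Fin d) (Fin d) ℝ}

theorem bottleneck_blockTriangular (hW : ∀ e ∈ G.edgeSet, (W e)⁻¹.IsLowerTriangular)
    (x y : V) :
    (bottleneck hT d W x y).BlockTriangular fun p => toDual p.2 := by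
  intro p q hpq
  simp only [bottleneck, of_apply, Matrix.sum_apply]
  refine Finset.sum_eq_zero fun e he => hW e ?_ hpq
  exact mem_edgeSet_of_mem_pathEdges hT (List.mem_toFinset.1 (Finset.mem_inter.1 he).1)

theorem bottleneck_submatrix_snd (hW : ∀ e ∈ G.edgeSet, ∀ j, (W e)⁻¹ j j = (W e j j)⁻¹)
    (x y : V) (j : Fin d) :
    (bottleneck hT d W x y).submatrix (·, j) (·, j) = bottleneckScalar hT d W j x y := by
  ext a b
  simp only [bottleneck, bottleneckScalar, submatrix_apply, of_apply, Matrix.sum_apply]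
  refine Finset.sum_congr rfl fun e he => hW e ?_ j
  exact mem_edgeSet_of_mem_pathEdges hT (List.mem_toFinset.1 (Finset.mem_inter.1 he).1)

end Tree

theorem bottleneck_spectrum_lowerTriangular_general {V : Type*} [Fintype V] [DecidableEq V]
    (G : SimpleGraph V) (hT : G.IsTree) (d : ℕ) (hd : 0 < d)
    (W : Sym2 V → Matrix (Fin d) (Fin d) ℝ)
    (htri : ∀ e ∈ G.edgeSet, ∀ l k : Fin d, l < k → W e l k = 0)
    (hdiag : ∀ e ∈ G.edgeSet, ∀ j : Fin d, 0 < W e j j)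
    (v u : V) :
    spectrum ℂ ((bottleneck hT d W v u).map (fun x : ℝ => (x : ℂ))) =
      (⋃ j : Fin d,
        spectrum ℂ ((bottleneckScalar hT d W j v u).map (fun x : ℝ => (x : ℂ)))) ∧
    IsGreatest (Set.range fun j : Fin d => sRad (bottleneckScalar hT d W j v u))
      (sRad (bottleneck hT d W v u)) := by
  have hW (e) (he : e ∈ G.edgeSet) : (W e).IsLowerTriangular := fun l k h => htri e he l k h
  have hspec : spectrum ℂ ((bottleneck hT d W v u).map (fun x : ℝ => (x : ℂ))) =
      ⋃ j, spectrum ℂ ((bottleneckScalar hT d W j v u).map (fun x : ℝ => (x : ℂ))) := by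
    have hM : ((bottleneck hT d W v u).map fun x : ℝ => (x : ℂ)).BlockTriangular
        fun p => toDual p.2 :=
      (bottleneck_blockTriangular hT (fun e he => (hW e he).inv) v u).map Complex.ofRealHom
    rw [hM.spectrum_eq_iUnion_submatrix_snd]
    simp only [submatrix_map, bottleneck_submatrix_snd hT
      fun e he => (hW e he).inv_apply_self fun j => (hdiag e he j).ne']
  have : Nonempty (Fin d) := Fin.pos_iff_nonempty.1 hd
  exact ⟨hspec, isGreatest_sRad_of_spectrum_eq_iUnion hspec⟩

/-- For a tree with lower triangular matrix edge weights with positive diagonal entries,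
the spectrum of a bottleneck matrix is the union of the spectra of the scalar bottleneck
matrices of the induced trees `T^{(j)}`, and its spectral radius is the maximum of their
spectral radii. -/
theorem bottleneck_spectrum_lowerTriangular {V : Type*} [Fintype V] [DecidableEq V]
    (G : SimpleGraph V) (hT : G.IsTree) (d : ℕ) (hd : 0 < d)
    (W : Sym2 V → Matrix (Fin d) (Fin d) ℝ)
    (htri : ∀ e ∈ G.edgeSet, ∀ l k : Fin d, l < k → W e l k = 0)
    (hdiag : ∀ e ∈ G.edgeSet, ∀ j : Fin d, 0 < W e j j)
    (v u : V) (hadj : G.Adj v u) :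
    spectrum ℂ ((bottleneck hT d W v u).map (fun x : ℝ => (x : ℂ))) =
      (⋃ j : Fin d,
        spectrum ℂ ((bottleneckScalar hT d W j v u).map (fun x : ℝ => (x : ℂ)))) ∧
    IsGreatest (Set.range fun j : Fin d => sRad (bottleneckScalar hT d W j v u))
      (sRad (bottleneck hT d W v u)) :=
  bottleneck_spectrum_lowerTriangular_general G hT d hd W htri hdiag v u
end

section
/- Let T be a tree with nonsingular s×s matrix edge weights, and let e be an edge between vertices u and v with weight W(e). For any real α with 0 < α < 1, the matrix M_u(v) − α (J ⊗ W(e)⁻¹) is invertible, and its inverse equals M_u(v)⁻¹ + e_v e_vᵀ ⊗ ((α/(1−α)) W(e)), where e_v is the standard basis column vector (of conformal order) with 1 in the position of vertex v. -/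
open scoped Classical
open Matrix

/-!
Write `U = 𝟙 ⊗ I` and `E = e_v ⊗ I` for the block columns, so that `J ⊗ W(e)⁻¹ = U W(e)⁻¹ Uᵀ` and
`e_v e_vᵀ ⊗ W(e) = E W(e) Eᵀ`. Every path from the branch `B_u(v)` to `u` ends with the edge `e`,
and the path from `v` consists of `e` alone; hence the `v`-th block row and block column of
`M = M_u(v)` are constantly `W(e)⁻¹`, i.e. `M E = U W(e)⁻¹` and `Eᵀ M = W(e)⁻¹ Uᵀ`. With `Uᵀ E = I`
these identities turn all cross terms of the product into multiples of `U Eᵀ`, whose coefficients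
cancel since `α/(1-α) - α - α²/(1-α) = 0`. That `M` is invertible follows from the factorization
`M = (A ⊗ I) D (A ⊗ I)ᵀ`, where `A` is the 0/1 matrix of the ancestor relation towards `u`, which is
unitriangular when vertices are ordered by depth, and `D` is block diagonal with the blocks
`W(f)⁻¹`, `f` running over the edges from the vertices of the branch towards `u`.
-/

namespace Matrix

variable {ι m n R : Type*} [DecidableEq m] [Semiring R]

def blockOnes : Matrix (ι × m) m R := of fun p j => (1 : Matrix m m R) p.2 j

theorem blockOnes_mul [Fintype m] (A : Matrix m n R) :
    (blockOnes : Matrix (ι × m) m R) * A = of fun p j => A p.2 j := by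
  ext p j
  simp [blockOnes, Matrix.mul_apply, one_apply]

theorem mul_transpose_blockOnes [Fintype m] (A : Matrix n m R) :
    A * (blockOnes : Matrix (ι × m) m R)ᵀ = of fun i q => A i q.2 := by
  ext p j
  simp [blockOnes, Matrix.mul_apply, one_apply]

theorem blockOnes_mul_mul_transpose [Fintype m] (A : Matrix m m R) :
    (blockOnes : Matrix (ι × m) m R) * A * (blockOnes : Matrix (ι × m) m R)ᵀ =
      of fun p q => A p.2 q.2 := by
  rw [blockOnes_mul, mul_transpose_blockOnes]
  rfl

variable [DecidableEq ι]

def blockSingle (x : ι) : Matrix (ι × m) m R :=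
  of fun p j => if p.1 = x then (1 : Matrix m m R) p.2 j else 0

theorem blockSingle_mul_mul_transpose [Fintype m] (A : Matrix m m R) (x : ι) :
    (blockSingle x : Matrix (ι × m) m R) * A * (blockSingle x : Matrix (ι × m) m R)ᵀ =
      of fun p q => if p.1 = x ∧ q.1 = x then A p.2 q.2 else 0 := by
  ext p q
  simp [blockSingle, Matrix.mul_apply, one_apply, ite_and]
  split_ifs <;> rfl

variable [Fintype ι] [Fintype m]

theorem mul_blockSingle (B : Matrix n (ι × m) R) (x : ι) :
    B * (blockSingle x : Matrix (ι × m) m R) = of fun p j => B p (x, j) := by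
  ext p j
  simp [blockSingle, Matrix.mul_apply, one_apply, Fintype.sum_prod_type]

theorem transpose_blockSingle_mul (B : Matrix (ι × m) n R) (x : ι) :
    (blockSingle x : Matrix (ι × m) m R)ᵀ * B = of fun i q => B (x, i) q := by
  ext p j
  simp [blockSingle, Matrix.mul_apply, one_apply, Fintype.sum_prod_type]

theorem transpose_blockOnes_mul_blockSingle (x : ι) :
    (blockOnes : Matrix (ι × m) m R)ᵀ * (blockSingle x : Matrix (ι × m) m R) = 1 := by
  rw [mul_blockSingle]
  ext i j
  simp [blockOnes, one_apply, eq_comm]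

section Field

variable {n m K : Type*} [Fintype n] [DecidableEq n] [Fintype m] [DecidableEq m] [Field K]

theorem sub_smul_mul_add_smul_eq_one {M : Matrix n n K} {W : Matrix m m K} {E U : Matrix n m K}
    (hM : IsUnit M.det) (hW : IsUnit W.det) (hME : M * E = U * W⁻¹)
    (hEM : Eᵀ * M = W⁻¹ * Uᵀ) (hUE : Uᵀ * E = 1) {α c : K} (hc : c * (1 - α) = α) :
    (M - α • (U * W⁻¹ * Uᵀ)) * (M⁻¹ + c • (E * W * Eᵀ)) = 1 := by
  have hMP : M * (E * W * Eᵀ) = U * Eᵀ := by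
    rw [← Matrix.mul_assoc, ← Matrix.mul_assoc, hME, Matrix.mul_assoc U, nonsing_inv_mul _ hW,
      Matrix.mul_one]
  have hUM : Uᵀ * M⁻¹ = W * Eᵀ :=
    calc Uᵀ * M⁻¹ = W * (W⁻¹ * Uᵀ) * M⁻¹ := by
          rw [← Matrix.mul_assoc, mul_nonsing_inv _ hW, Matrix.one_mul]
      _ = W * Eᵀ := by
          rw [← hEM, Matrix.mul_assoc, Matrix.mul_assoc, mul_nonsing_inv _ hM, Matrix.mul_one]
  have hQM : U * W⁻¹ * Uᵀ * M⁻¹ = U * Eᵀ := by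
    rw [Matrix.mul_assoc, hUM, ← Matrix.mul_assoc, Matrix.mul_assoc U, nonsing_inv_mul _ hW,
      Matrix.mul_one]
  have hQP : U * W⁻¹ * Uᵀ * (E * W * Eᵀ) = U * Eᵀ := by
    rw [Matrix.mul_assoc, ← Matrix.mul_assoc Uᵀ, ← Matrix.mul_assoc Uᵀ, hUE, Matrix.one_mul,
      ← Matrix.mul_assoc, Matrix.mul_assoc U, nonsing_inv_mul _ hW, Matrix.mul_one]
  have hcoeff : c - (α + α * c) = 0 := by linear_combination hc
  rw [sub_mul, mul_add, mul_add, mul_nonsing_inv _ hM, Matrix.mul_smul, hMP, Matrix.smul_mul,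
    hQM, Matrix.smul_mul, Matrix.mul_smul, hQP, smul_smul, add_sub_assoc, ← add_smul,
    ← sub_smul, hcoeff, zero_smul, add_zero]

end Field

end Matrix

namespace SimpleGraph.IsTree

open SimpleGraph

variable {V : Type*} {G : SimpleGraph V} (hT : G.IsTree)

theorem isPath_pathWalk (a b : V) : (pathWalk hT a b).IsPath :=
  (hT.existsUnique_path a b).choose_spec.1

theorem eq_pathWalk {a b : V} {p : G.Walk a b} (hp : p.IsPath) : p = pathWalk hT a b :=
  congrArg Subtype.val
    ((hT.isAcyclic.subsingleton_path a b).elim ⟨p, hp⟩ ⟨_, isPath_pathWalk hT a b⟩)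

theorem pathWalk_self (a : V) : pathWalk hT a a = Walk.nil :=
  (eq_pathWalk hT Walk.IsPath.nil).symm

theorem pathWalk_dropUntil {a b z : V} (hz : z ∈ (pathWalk hT a b).support) :
    (pathWalk hT a b).dropUntil z hz = pathWalk hT z b :=
  eq_pathWalk hT ((isPath_pathWalk hT a b).dropUntil hz)

noncomputable def depth (b z : V) : ℕ := (pathWalk hT z b).length

noncomputable def parent (b z : V) : V := (pathWalk hT z b).snd

theorem pathWalk_parent (b z : V) :
    pathWalk hT (parent hT b z) b = (pathWalk hT z b).tail :=
  (eq_pathWalk hT (isPath_pathWalk hT z b).tail).symm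

theorem not_nil_pathWalk {b z : V} (hz : z ≠ b) : ¬(pathWalk hT z b).Nil :=
  fun h => hz h.eq

theorem adj_parent {b z : V} (hz : z ≠ b) : G.Adj z (parent hT b z) :=
  Walk.adj_snd (not_nil_pathWalk hT hz)

theorem depth_parent_add_one {b z : V} (hz : z ≠ b) :
    depth hT b (parent hT b z) + 1 = depth hT b z := by
  rw [depth, depth, pathWalk_parent]
  exact Walk.length_tail_add_one (not_nil_pathWalk hT hz)

theorem depth_le_of_mem_support {b y z : V} (hz : z ∈ (pathWalk hT y b).support) :
    depth hT b z ≤ depth hT b y := by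
  rw [depth, depth, ← pathWalk_dropUntil hT hz]
  exact Walk.length_dropUntil_le_length _ hz

theorem eq_of_mem_support_of_depth_eq {b y z : V} (hz : z ∈ (pathWalk hT y b).support)
    (h : depth hT b z = depth hT b y) : z = y := by
  have hsplit := congrArg Walk.length ((pathWalk hT y b).take_spec hz)
  rw [Walk.length_append, pathWalk_dropUntil hT hz] at hsplit
  rw [depth, depth] at h
  exact (Walk.eq_of_length_eq_zero (p := (pathWalk hT y b).takeUntil z hz) (by omega)).symm

noncomputable def parentEdge (b z : V) : Sym2 V := s(z, parent hT b z)

theorem parentEdge_injOn (b : V) : Set.InjOn (parentEdge hT b) {z | z ≠ b} := by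
  intro z hz z' hz' h
  rcases Sym2.eq_iff.1 h with ⟨h1, -⟩ | ⟨h1, h2⟩
  · exact h1
  · have := depth_parent_add_one hT hz
    have := depth_parent_add_one hT hz'
    rw [← h1, h2] at *
    omega

theorem edges_eq_map_parentEdge_of_isPath {b z : V} {p : G.Walk z b} (hp : p.IsPath) :
    p.edges = (p.support.filter (· ≠ b)).map (parentEdge hT b) := by
  induction p with
  | nil => simp
  | @cons z w b h q ih =>
    have hzb : z ≠ b := fun hzb =>
      ((Walk.cons_isPath_iff h q).1 hp).2 (hzb ▸ q.end_mem_support)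
    have hpar : parent hT b z = w := by
      rw [parent, ← eq_pathWalk hT hp, Walk.snd_cons]
    simp [ih hp.of_cons, hzb, parentEdge, hpar]

theorem mem_edges_pathWalk_iff {b z : V} {f : Sym2 V} :
    f ∈ (pathWalk hT z b).edges ↔
      ∃ x ∈ (pathWalk hT z b).support, x ≠ b ∧ parentEdge hT b x = f := by
  simp [edges_eq_map_parentEdge_of_isPath hT (isPath_pathWalk hT z b), and_assoc]

section Branch

variable {u v : V} (hadj : G.Adj u v)
include hadj

theorem mem_branch_self : v ∈ branch hT u v :=
  ⟨hadj.ne', by simp [pathWalk_self, hadj.ne]⟩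

theorem pathWalk_eq_concat_of_mem_branch {y : V} (hy : y ∈ branch hT u v) :
    pathWalk hT y u = (pathWalk hT y v).concat hadj.symm := by
  refine (eq_pathWalk hT ?_).symm
  rw [Walk.isPath_def, Walk.support_concat, List.nodup_append]
  exact ⟨(isPath_pathWalk hT y v).support_nodup, List.nodup_singleton _,
    fun a ha b hb hab => hy.2 (by rw [List.mem_singleton] at hb; rwa [← hb, ← hab])⟩

theorem mem_branch_of_mem_support {y z : V} (hy : y ∈ branch hT u v)
    (hz : z ∈ (pathWalk hT y u).support) (hzu : z ≠ u) : z ∈ branch hT u v := by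
  rw [pathWalk_eq_concat_of_mem_branch hT hadj hy, Walk.support_concat, List.mem_append,
    List.mem_singleton, or_iff_left hzu] at hz
  refine ⟨hzu, fun hu => hy.2 ?_⟩
  rw [← pathWalk_dropUntil hT hz] at hu
  exact Walk.support_dropUntil_subset_support _ _ hu

theorem pathEdges_inter_pathEdges_eq_singleton {y : V} (hy : y ∈ branch hT u v) :
    (pathEdges hT v u).toFinset ∩ (pathEdges hT y u).toFinset = {s(u, v)} := by
  have hvu : pathEdges hT v u = [s(u, v)] := by
    have hp : (Walk.cons hadj.symm Walk.nil).IsPath := by simp [hadj.ne']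
    simp [pathEdges, ← eq_pathWalk hT hp, Sym2.eq_swap]
  have huv : s(u, v) ∈ pathEdges hT y u := by
    rw [pathEdges, pathWalk_eq_concat_of_mem_branch hT hadj hy, Walk.edges_concat]
    simp [Sym2.eq_swap]
  simpa [hvu] using huv

end Branch

section Bottleneck

variable {u v : V} (d : ℕ) (W : Sym2 V → Matrix (Fin d) (Fin d) ℝ)

noncomputable def ancestorMatrix (R : Type*) [Zero R] [One R] (u v : V) :
    Matrix (branch hT u v) (branch hT u v) R :=
  of fun y x => if (x : V) ∈ (pathWalk hT y u).support then 1 else 0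

theorem blockTriangular_ancestorMatrix (R : Type*) [Zero R] [One R] :
    (ancestorMatrix hT R u v).BlockTriangular fun y => OrderDual.toDual (depth hT u y) := by
  intro y x hlt
  refine if_neg fun hx => ?_
  exact absurd (depth_le_of_mem_support hT hx) (not_le.2 hlt)

variable [Fintype V]

theorem pathEdges_inter_pathEdges_eq_image (hadj : G.Adj u v) (y z : branch hT u v) :
    (pathEdges hT y u).toFinset ∩ (pathEdges hT z u).toFinset =
      (Finset.univ.filter fun x : branch hT u v => (x : V) ∈ (pathWalk hT y u).support ∧
        (x : V) ∈ (pathWalk hT z u).support).image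
          fun x : branch hT u v => parentEdge hT u (x : V) := by
  ext f
  simp only [Finset.mem_inter, List.mem_toFinset, pathEdges, mem_edges_pathWalk_iff,
    Finset.mem_image, Finset.mem_filter, Finset.mem_univ, true_and]
  constructor
  · rintro ⟨⟨x, hxy, hxu, rfl⟩, ⟨x', hx'z, hx'u, hxx'⟩⟩
    have hx'x : x' = x := parentEdge_injOn hT u hx'u hxu hxx'
    exact ⟨⟨x, mem_branch_of_mem_support hT hadj y.2 hxy hxu⟩, ⟨hxy, hx'x ▸ hx'z⟩, rfl⟩
  · rintro ⟨x, ⟨hxy, hxz⟩, rfl⟩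
    exact ⟨⟨x, hxy, x.2.1, rfl⟩, ⟨x, hxz, x.2.1, rfl⟩⟩

theorem bottleneck_apply_eq_sum (hadj : G.Adj u v) (y z : branch hT u v) (i j : Fin d) :
    bottleneck hT d W u v (y, i) (z, j) = ∑ x, ancestorMatrix hT ℝ u v y x *
      ancestorMatrix hT ℝ u v z x * (W (parentEdge hT u x))⁻¹ i j := by
  simp only [bottleneck, of_apply, Matrix.sum_apply]
  rw [pathEdges_inter_pathEdges_eq_image hT hadj,
    Finset.sum_image fun x _ x' _ h => Subtype.ext (parentEdge_injOn hT u x.2.1 x'.2.1 h)]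
  simp only [Finset.sum_filter, ancestorMatrix, of_apply, ite_mul, one_mul, zero_mul, ite_and]

-- From here on, `DecidableEq` instances on the branch come from `[DecidableEq V]`, as in
-- `bottleneck_shift_inverse`, rather than from `Classical.propDecidable`.
variable [DecidableEq V]

theorem bottleneck_mul_blockSingle (hadj : G.Adj u v) :
    bottleneck hT d W u v *
        (blockSingle ⟨v, mem_branch_self hT hadj⟩ : Matrix (branch hT u v × Fin d) (Fin d) ℝ) =
      (blockOnes : Matrix (branch hT u v × Fin d) (Fin d) ℝ) * (W s(u, v))⁻¹ := by
  rw [mul_blockSingle, blockOnes_mul]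
  ext p j
  simp [bottleneck, Finset.inter_comm, pathEdges_inter_pathEdges_eq_singleton hT hadj p.1.2]

theorem transpose_blockSingle_mul_bottleneck (hadj : G.Adj u v) :
    (blockSingle ⟨v, mem_branch_self hT hadj⟩ : Matrix (branch hT u v × Fin d) (Fin d) ℝ)ᵀ *
        bottleneck hT d W u v =
      (W s(u, v))⁻¹ * (blockOnes : Matrix (branch hT u v × Fin d) (Fin d) ℝ)ᵀ := by
  rw [transpose_blockSingle_mul, mul_transpose_blockOnes]
  ext i q
  simp [bottleneck, pathEdges_inter_pathEdges_eq_singleton hT hadj q.1.2]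

theorem det_ancestorMatrix (R : Type*) [CommRing R] : (ancestorMatrix hT R u v).det = 1 := by
  rw [(blockTriangular_ancestorMatrix hT R).det]
  refine Finset.prod_eq_one fun k _ => ?_
  suffices (ancestorMatrix hT R u v).toSquareBlock (fun y => OrderDual.toDual (depth hT u y)) k =
      1 by
    rw [this, det_one]
  ext ⟨y, hy⟩ ⟨x, hx⟩
  have hxy : ((x : V) ∈ (pathWalk hT y u).support) ↔ y = x :=
    ⟨fun h => (Subtype.ext (eq_of_mem_support_of_depth_eq hT h (hx.trans hy.symm))).symm,
      fun h => h ▸ Walk.start_mem_support _⟩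
  simp only [toSquareBlock_def, ancestorMatrix, of_apply, one_apply, hxy, Subtype.mk.injEq]

noncomputable def invWeightDiag (u v : V) :
    Matrix (branch hT u v × Fin d) (branch hT u v × Fin d) ℝ :=
  reindex (Equiv.prodComm _ _) (Equiv.prodComm _ _)
    (blockDiagonal fun x : branch hT u v => (W (parentEdge hT u x))⁻¹)

theorem isUnit_det_invWeightDiag (hW : ∀ e ∈ G.edgeSet, IsUnit (W e)) :
    IsUnit (invWeightDiag hT d W u v).det := by
  rw [invWeightDiag, det_reindex_self, det_blockDiagonal]
  exact IsUnit.prod_univ_iff.2 fun x => isUnit_nonsing_inv_det _ <|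
    (isUnit_iff_isUnit_det _).1 <| hW _ (adj_parent hT x.2.1)

open scoped Kronecker in
theorem bottleneck_eq_ancestorMatrix_mul (hadj : G.Adj u v) :
    bottleneck hT d W u v = (ancestorMatrix hT ℝ u v ⊗ₖ (1 : Matrix (Fin d) (Fin d) ℝ)) *
      invWeightDiag hT d W u v * (ancestorMatrix hT ℝ u v ⊗ₖ (1 : Matrix (Fin d) (Fin d) ℝ))ᵀ := by
  ext ⟨y, i⟩ ⟨z, j⟩
  rw [bottleneck_apply_eq_sum hT d W hadj]
  simp [Matrix.mul_apply, Fintype.sum_prod_type, invWeightDiag, blockDiagonal_apply, one_apply,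
    mul_right_comm]

theorem isUnit_det_bottleneck (hadj : G.Adj u v) (hW : ∀ e ∈ G.edgeSet, IsUnit (W e)) :
    IsUnit (bottleneck hT d W u v).det := by
  rw [bottleneck_eq_ancestorMatrix_mul hT d W hadj, det_mul, det_mul, det_transpose,
    det_kronecker, det_ancestorMatrix, det_one]
  simpa using isUnit_det_invWeightDiag hT d W hW

end Bottleneck

end SimpleGraph.IsTree

theorem bottleneck_shift_inverse_general {V : Type*} [Fintype V] [DecidableEq V]
    (G : SimpleGraph V) (hT : G.IsTree) (d : ℕ)
    (W : Sym2 V → Matrix (Fin d) (Fin d) ℝ)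
    (hW : ∀ e ∈ G.edgeSet, IsUnit (W e))
    (u v : V) (hadj : G.Adj u v) (α : ℝ) (hα1 : α < 1) :
    letI A : Matrix (↥(branch hT u v) × Fin d) (↥(branch hT u v) × Fin d) ℝ :=
      bottleneck hT d W u v -
        Matrix.of (fun p q : ↥(branch hT u v) × Fin d =>
          α * (W (Sym2.mk u v))⁻¹ p.2 q.2)
    letI N : Matrix (↥(branch hT u v) × Fin d) (↥(branch hT u v) × Fin d) ℝ :=
      (bottleneck hT d W u v)⁻¹ +
        Matrix.of (fun p q : ↥(branch hT u v) × Fin d =>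
          if (p.1 : V) = v ∧ (q.1 : V) = v then
            (α / (1 - α)) * W (Sym2.mk u v) p.2 q.2
          else 0)
    A * N = 1 ∧ N * A = 1 := by
  have hv := hT.mem_branch_self hadj
  let E : Matrix (branch hT u v × Fin d) (Fin d) ℝ := blockSingle ⟨v, hv⟩
  let U : Matrix (branch hT u v × Fin d) (Fin d) ℝ := blockOnes
  have hJ : (of fun p q : branch hT u v × Fin d => α * (W s(u, v))⁻¹ p.2 q.2) =
      α • (U * (W s(u, v))⁻¹ * Uᵀ) := by
    rw [blockOnes_mul_mul_transpose]
    rfl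
  have hE : (of fun p q : branch hT u v × Fin d =>
      if (p.1 : V) = v ∧ (q.1 : V) = v then (α / (1 - α)) * W s(u, v) p.2 q.2 else 0) =
      (α / (1 - α)) • (E * W s(u, v) * Eᵀ) := by
    rw [blockSingle_mul_mul_transpose]
    ext p q
    simp [Subtype.ext_iff]
  rw [hJ, hE]
  have hAN := sub_smul_mul_add_smul_eq_one (hT.isUnit_det_bottleneck d W hadj hW)
    ((isUnit_iff_isUnit_det _).1 (hW s(u, v) hadj)) (hT.bottleneck_mul_blockSingle d W hadj)
    (hT.transpose_blockSingle_mul_bottleneck d W hadj) (transpose_blockOnes_mul_blockSingle _)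
    (div_mul_cancel₀ α (sub_ne_zero.2 hα1.ne'))
  exact ⟨hAN, mul_eq_one_comm.1 hAN⟩

/-- For a tree with nonsingular matrix edge weights, an edge `e` between `u` and `v`, and
`0 < α < 1`, the matrix `M_u(v) - α (J ⊗ W(e)⁻¹)` is invertible with inverse
`M_u(v)⁻¹ + e_v e_vᵀ ⊗ ((α/(1-α)) W(e))`. -/
theorem bottleneck_shift_inverse {V : Type*} [Fintype V] [DecidableEq V]
    (G : SimpleGraph V) (hT : G.IsTree) (d : ℕ)
    (W : Sym2 V → Matrix (Fin d) (Fin d) ℝ)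
    (hW : ∀ e ∈ G.edgeSet, IsUnit (W e))
    (u v : V) (hadj : G.Adj u v) (α : ℝ) (hα0 : 0 < α) (hα1 : α < 1) :
    letI A : Matrix (↥(branch hT u v) × Fin d) (↥(branch hT u v) × Fin d) ℝ :=
      bottleneck hT d W u v -
        Matrix.of (fun p q : ↥(branch hT u v) × Fin d =>
          α * (W (Sym2.mk u v))⁻¹ p.2 q.2)
    letI N : Matrix (↥(branch hT u v) × Fin d) (↥(branch hT u v) × Fin d) ℝ :=
      (bottleneck hT d W u v)⁻¹ +
        Matrix.of (fun p q : ↥(branch hT u v) × Fin d =>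
          if (p.1 : V) = v ∧ (q.1 : V) = v then
            (α / (1 - α)) * W (Sym2.mk u v) p.2 q.2
          else 0)
    A * N = 1 ∧ N * A = 1 :=
  bottleneck_shift_inverse_general G hT d W hW u v hadj α hα1
end

section
/- Let T be a tree on n vertices with nonsingular s×s matrix edge weights and Laplacian L(T), and let e be an edge between vertices u and v with weight W(e). For 0 < α < 1, the matrix L(T) + E ⊗ W(e) is block-diagonal equal to diag([M_u(v) − α(J ⊗ W(e)⁻¹)]⁻¹, [M_v(u) − (1−α)(J ⊗ W(e)⁻¹)]⁻¹), where E is the n×n matrix with E_{vv} = α/(1−α), E_{uu} = (1−α)/α, E_{uv} = E_{vu} = 1, and all other entries 0. -/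
open scoped Classical
open Matrix

/-!
Root the tree at `u`. Column `z` of the bottleneck matrix is the sum, over the edges `f` of the
path from `z` to `u`, of `W(f)⁻¹` times the indicator of the subtree below `f`; the Laplacian maps
that indicator to `W(f) (e_child - e_parent)`, and these telescope along the path to `e_z - e_u`.
Hence `M_u(v)` inverts the principal submatrix `L_B` of `L(T)` on `B = B_u(v)`. Since `uv` is the
only edge leaving `B`, the rows of `L_B` sum to `W(e)` at `v` and to `0` elsewhere, while row `v`
of `M_u(v)` is constantly `W(e)⁻¹`; so `(L_B + c E_vv ⊗ W(e)) (M_u(v) - α J ⊗ W(e)⁻¹) = I`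
exactly when `c (1 - α) = α`. The same holds on `B_v(u)` with `1 - α`, and the blocks `-W(e)` of
`L(T)` joining the two branches are cancelled by the unit entries of `E`.
-/

theorem add_smul_mul_sub_smul_eq_one {K A : Type*} [CommRing K] [Ring A] [Algebra K A]
    {L M S J R : A} {β c : K} (hLM : L * M = 1) (hLJ : L * J = R) (hSM : S * M = R)
    (hSJ : S * J = R) (hc : c * (1 - β) = β) : (L + c • S) * (M - β • J) = 1 := by
  rw [add_mul, mul_sub, mul_sub, smul_mul_assoc, smul_mul_assoc, mul_smul_comm, mul_smul_comm,
    hLM, hLJ, hSM, hSJ]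
  calc 1 - β • R + (c • R - c • β • R) = 1 + (c * (1 - β) - β) • R := by module
    _ = 1 := by rw [hc, sub_self, zero_smul, add_zero]

theorem Matrix.inv_comp_eq_of_mul_eq_one {ι κ R : Type*} [Fintype ι] [Fintype κ] [DecidableEq ι]
    [DecidableEq κ] [CommRing R] {N A : Matrix ι ι (Matrix κ κ R)} (h : N * A = 1) :
    (Matrix.comp ι ι κ κ R A)⁻¹ = Matrix.comp ι ι κ κ R N :=
  Matrix.inv_eq_left_inv <| by
    rw [← Matrix.compRingEquiv_apply, ← Matrix.compRingEquiv_apply, ← map_mul, h, map_one]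

section TreePaths

open SimpleGraph

variable {V : Type*} {G : SimpleGraph V} (hT : G.IsTree)

theorem pathWalk_isPath_s16 (a b : V) : (pathWalk hT a b).IsPath :=
  (hT.existsUnique_path a b).choose_spec.1

theorem pathWalk_eq_of_isPath {a b : V} {p : G.Walk a b} (hp : p.IsPath) :
    pathWalk hT a b = p :=
  ((hT.existsUnique_path a b).choose_spec.2 p hp).symm

theorem pathWalk_self (a : V) : pathWalk hT a a = .nil :=
  pathWalk_eq_of_isPath hT .nil

theorem pathWalk_eq_cons {x n c : V} (h : G.Adj x n) (hx : x ∉ (pathWalk hT n c).support) :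
    pathWalk hT x c = .cons h (pathWalk hT n c) :=
  pathWalk_eq_of_isPath hT ((pathWalk_isPath_s16 hT n c).cons hx)

theorem pathWalk_of_adj {a b : V} (h : G.Adj a b) :
    pathWalk hT a b = .cons h (pathWalk hT b b) :=
  pathWalk_eq_cons hT h (by simp [pathWalk_self, h.ne])

theorem pathWalk_eq_append {x z c : V} (hx : x ∈ (pathWalk hT z c).support) :
    pathWalk hT z c = (pathWalk hT z x).append (pathWalk hT x c) := by
  have hp := pathWalk_isPath_s16 hT z c
  rw [pathWalk_eq_of_isPath hT (hp.takeUntil hx), pathWalk_eq_of_isPath hT (hp.dropUntil hx),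
    Walk.take_spec]

theorem pathWalk_eq_concat {x y c : V} (h : G.Adj y c) (hc : c ∉ (pathWalk hT x y).support) :
    pathWalk hT x c = (pathWalk hT x y).concat h :=
  pathWalk_eq_of_isPath hT ((pathWalk_isPath_s16 hT x y).concat hc h)

/-- The vertices below `z` when the tree is rooted at `a`. -/
def subtree (a z : V) : Set V :=
  {y | z ∈ (pathWalk hT y a).support}

theorem mem_subtree_self (a z : V) : z ∈ subtree hT a z :=
  (pathWalk hT z a).start_mem_support

variable {a w z : V} {hzw : G.Adj z w}

theorem mk_mem_pathEdges_iff (hz : pathWalk hT z a = .cons hzw (pathWalk hT w a)) (y : V) :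
    s(z, w) ∈ pathEdges hT y a ↔ y ∈ subtree hT a z := by
  refine ⟨(pathWalk hT y a).fst_mem_support_of_mem_edges, fun hy => ?_⟩
  rw [pathEdges, pathWalk_eq_append hT hy, Walk.edges_append, hz]
  simp

theorem notMem_subtree_of_pathWalk_eq_cons
    (hz : pathWalk hT z a = .cons hzw (pathWalk hT w a)) : w ∉ subtree hT a z := by
  have hp := pathWalk_isPath_s16 hT z a
  rw [hz, Walk.cons_isPath_iff] at hp
  exact hp.2

/-- The edge from `z` to its parent `w` is the only edge leaving the subtree of `z`. -/
theorem eq_and_eq_of_adj_of_mem_subtree (hz : pathWalk hT z a = .cons hzw (pathWalk hT w a))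
    {x n : V} (hxn : G.Adj x n) (hx : x ∈ subtree hT a z) (hn : n ∉ subtree hT a z) :
    x = z ∧ n = w := by
  by_cases hxn' : x ∈ (pathWalk hT n a).support
  · refine absurd ?_ hn
    show z ∈ (pathWalk hT n a).support
    rw [pathWalk_eq_append hT hxn', Walk.mem_support_append_iff]
    exact Or.inr hx
  · have hx' := pathWalk_eq_cons hT hxn hxn'
    have hzx : z = x := by
      simpa [subtree, hx', show z ∉ (pathWalk hT n a).support from hn] using hx
    subst hzx
    rw [hx'] at hz
    exact ⟨rfl, by simpa using congrArg Walk.snd hz⟩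

end TreePaths

section Laplacian

variable {V : Type*} [Fintype V] (G : SimpleGraph V) {d : ℕ}
  (W : Sym2 V → Matrix (Fin d) (Fin d) ℝ)

noncomputable def lapBlock : Matrix V V (Matrix (Fin d) (Fin d) ℝ) :=
  Matrix.of fun x y =>
    if x = y then ∑ n ∈ G.neighborFinset x, W s(x, n) else if G.Adj x y then -W s(x, y) else 0

theorem lap_apply_eq_lapBlock (x y : V) (i j : Fin d) :
    lap G d W (x, i) (y, j) = lapBlock G W x y i j := by
  simp only [lap, lapBlock, Matrix.of_apply]
  split_ifs <;> rfl

theorem sum_lapBlock_mul (x : V) (g : V → Matrix (Fin d) (Fin d) ℝ) :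
    ∑ y, lapBlock G W x y * g y = ∑ n ∈ G.neighborFinset x, W s(x, n) * (g x - g n) := by
  have hsplit : ∀ y, lapBlock G W x y * g y =
      (if x = y then (∑ n ∈ G.neighborFinset x, W s(x, n)) * g x else 0) +
        -(if G.Adj x y then W s(x, y) * g y else 0) := by
    intro y
    by_cases hxy : x = y
    · subst hxy; simp [lapBlock]
    · simp only [lapBlock, Matrix.of_apply, if_neg hxy]
      split_ifs <;> simp
  rw [Finset.sum_congr rfl fun y _ => hsplit y, Finset.sum_add_distrib, Finset.sum_ite_eq,
    if_pos (Finset.mem_univ x), Finset.sum_neg_distrib, ← Finset.sum_filter,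
    ← SimpleGraph.neighborFinset_eq_filter, Finset.sum_mul, ← sub_eq_add_neg,
    ← Finset.sum_sub_distrib]
  simp only [mul_sub]

theorem sum_lapBlock (x : V) : ∑ y, lapBlock G W x y = 0 := by
  simpa using sum_lapBlock_mul G W x 1

end Laplacian

section Bottleneck

open SimpleGraph

variable {V : Type*} {G : SimpleGraph V} (hT : G.IsTree) {d : ℕ}
  (W : Sym2 V → Matrix (Fin d) (Fin d) ℝ)

/-- The bottleneck matrix of the whole tree rooted at `a`, in `d × d` blocks;
`bottleneck hT d W a b` is its restriction to the branch `B_a(b)`. -/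
noncomputable def rootedBottleneck (a : V) : Matrix V V (Matrix (Fin d) (Fin d) ℝ) :=
  Matrix.of fun y z =>
    ∑ e ∈ (pathEdges hT y a).toFinset ∩ (pathEdges hT z a).toFinset, (W e)⁻¹

theorem rootedBottleneck_comm (a y z : V) :
    rootedBottleneck hT W a y z = rootedBottleneck hT W a z y := by
  simp only [rootedBottleneck, Matrix.of_apply, Finset.inter_comm]

theorem rootedBottleneck_root_apply (a z : V) : rootedBottleneck hT W a a z = 0 := by
  simp [rootedBottleneck, pathEdges, pathWalk_self]

theorem rootedBottleneck_apply_root (a y : V) : rootedBottleneck hT W a y a = 0 := by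
  simp [rootedBottleneck, pathEdges, pathWalk_self]

variable {a w z : V} {hzw : G.Adj z w}

theorem rootedBottleneck_apply_of_pathWalk_eq_cons
    (hz : pathWalk hT z a = .cons hzw (pathWalk hT w a)) (y : V) :
    rootedBottleneck hT W a y z =
      rootedBottleneck hT W a y w + if y ∈ subtree hT a z then (W s(z, w))⁻¹ else 0 := by
  have hnew : s(z, w) ∉ (pathEdges hT w a).toFinset := by
    simpa [mk_mem_pathEdges_iff hT hz] using notMem_subtree_of_pathWalk_eq_cons hT hz
  have hpath : (pathEdges hT z a).toFinset = insert s(z, w) (pathEdges hT w a).toFinset := by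
    simp [pathEdges, hz]
  simp only [rootedBottleneck, Matrix.of_apply, hpath]
  split_ifs with hy
  · rw [Finset.inter_insert_of_mem (by simpa [mk_mem_pathEdges_iff hT hz] using hy),
      Finset.sum_insert fun h => hnew (Finset.mem_inter.mp h).2, add_comm]
  · rw [Finset.inter_insert_of_notMem (by simpa [mk_mem_pathEdges_iff hT hz] using hy),
      add_zero]

variable [Fintype V]

theorem sum_lapBlock_mul_subtree_indicator (hz : pathWalk hT z a = .cons hzw (pathWalk hT w a))
    (hW : IsUnit (W s(z, w))) (x : V) :
    ∑ y, lapBlock G W x y * (if y ∈ subtree hT a z then (W s(z, w))⁻¹ else 0) =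
      (if x = z then 1 else 0) - if x = w then 1 else 0 := by
  have hWinv : W s(z, w) * (W s(z, w))⁻¹ = 1 :=
    Matrix.mul_nonsing_inv _ ((Matrix.isUnit_iff_isUnit_det _).mp hW)
  have hzS := mem_subtree_self hT a z
  have hwS := notMem_subtree_of_pathWalk_eq_cons hT hz
  have hterm : ∀ n ∈ G.neighborFinset x,
      W s(x, n) * ((if x ∈ subtree hT a z then (W s(z, w))⁻¹ else 0) -
          if n ∈ subtree hT a z then (W s(z, w))⁻¹ else 0) =
        (if x = z ∧ n = w then 1 else 0) - if x = w ∧ n = z then 1 else 0 := by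
    intro n hn
    have hxn : G.Adj x n := (G.mem_neighborFinset x n).mp hn
    by_cases hx : x ∈ subtree hT a z <;> by_cases hnS : n ∈ subtree hT a z
    · have h₁ : ¬ (x = z ∧ n = w) := fun h => hwS (h.2 ▸ hnS)
      have h₂ : ¬ (x = w ∧ n = z) := fun h => hwS (h.1 ▸ hx)
      simp [hx, hnS, h₁, h₂]
    · obtain ⟨rfl, rfl⟩ := eq_and_eq_of_adj_of_mem_subtree hT hz hxn hx hnS
      simp [hx, hnS, hWinv, hzw.ne]
    · obtain ⟨rfl, rfl⟩ := eq_and_eq_of_adj_of_mem_subtree hT hz hxn.symm hnS hx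
      rw [Sym2.eq_swap]
      simp [hx, hnS, hWinv, hzw.ne']
    · have h₁ : ¬ (x = z ∧ n = w) := fun h => hx (h.1 ▸ hzS)
      have h₂ : ¬ (x = w ∧ n = z) := fun h => hnS (h.2 ▸ hzS)
      simp [hx, hnS, h₁, h₂]
  rw [sum_lapBlock_mul, Finset.sum_congr rfl hterm, Finset.sum_sub_distrib]
  simp only [ite_and]
  congr 1 <;> split_ifs with h <;> simp [h, hzw, hzw.symm]

theorem lapBlock_mul_rootedBottleneck (hW : ∀ e ∈ G.edgeSet, IsUnit (W e)) {x : V}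
    (hx : x ≠ a) (z : V) :
    (lapBlock G W * rootedBottleneck hT W a) x z = if x = z then 1 else 0 := by
  suffices ∀ (z b : V) (p : G.Walk z b), p.IsPath → b = a →
      (lapBlock G W * rootedBottleneck hT W a) x z = if x = z then 1 else 0 from
    this z a _ (pathWalk_isPath_s16 hT z a) rfl
  intro z b p hp hb
  subst hb
  induction p with
  | nil => simp [Matrix.mul_apply, rootedBottleneck_apply_root, hx]
  | @cons z w b hzw q ih =>
    have hq : q.IsPath := (Walk.cons_isPath_iff hzw q).mp hp |>.1
    have hz : pathWalk hT z b = .cons hzw (pathWalk hT w b) := by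
      rw [pathWalk_eq_of_isPath hT hq]
      exact pathWalk_eq_of_isPath hT hp
    simp only [Matrix.mul_apply, rootedBottleneck_apply_of_pathWalk_eq_cons hT W hz, mul_add,
      Finset.sum_add_distrib] at ih ⊢
    rw [ih hq hx, sum_lapBlock_mul_subtree_indicator hT W hz (hW _ hzw)]
    abel

end Bottleneck

section Branch

open SimpleGraph

variable {V : Type*} {G : SimpleGraph V} (hT : G.IsTree) {d : ℕ}
  (W : Sym2 V → Matrix (Fin d) (Fin d) ℝ) {a b : V}

theorem branch_eq_subtree (hab : G.Adj a b) : branch hT a b = subtree hT a b := by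
  ext y
  constructor
  · rintro ⟨-, hy⟩
    rw [subtree, Set.mem_ofPred_eq, pathWalk_eq_concat hT hab.symm hy, Walk.support_concat]
    simp
  · intro hy
    have hp := pathWalk_isPath_s16 hT y a
    rw [pathWalk_eq_append hT hy, pathWalk_of_adj hT hab.symm, pathWalk_self,
      ← Walk.concat_eq_append,
      Walk.concat_isPath_iff] at hp
    refine ⟨?_, hp.2⟩
    rintro rfl
    exact hp.2 (pathWalk hT _ b).start_mem_support

theorem mem_branch_self (hab : G.Adj a b) : b ∈ branch hT a b :=
  (branch_eq_subtree hT hab).symm ▸ mem_subtree_self hT a b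

theorem mem_branch_swap_iff (hab : G.Adj a b) {x : V} :
    x ∈ branch hT b a ↔ x ∉ branch hT a b := by
  rw [branch_eq_subtree hT hab.symm]
  simp only [subtree, branch, Set.mem_ofPred_eq, not_and, not_not]
  refine ⟨fun h _ => h, fun h => ?_⟩
  by_cases hxa : x = a
  · exact hxa ▸ (pathWalk hT a b).start_mem_support
  · exact h hxa

theorem eq_and_eq_of_adj_of_mem_branch (hab : G.Adj a b) {x n : V} (hxn : G.Adj x n)
    (hx : x ∈ branch hT a b) (hn : n ∉ branch hT a b) : x = b ∧ n = a := by
  rw [branch_eq_subtree hT hab] at hx hn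
  exact eq_and_eq_of_adj_of_mem_subtree hT (pathWalk_of_adj hT hab.symm) hxn hx hn

theorem rootedBottleneck_apply_of_mem_branch (hab : G.Adj a b) {z : V}
    (hz : z ∈ branch hT a b) : rootedBottleneck hT W a b z = (W s(a, b))⁻¹ := by
  rw [rootedBottleneck_comm, rootedBottleneck_apply_of_pathWalk_eq_cons hT W
    (pathWalk_of_adj hT hab.symm), rootedBottleneck_apply_root, ← branch_eq_subtree hT hab,
    if_pos hz, zero_add, Sym2.eq_swap]

variable [Fintype V]

theorem lapBlock_of_mem_branch_of_notMem (hab : G.Adj a b) {x z : V}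
    (hx : x ∈ branch hT a b) (hz : z ∉ branch hT a b) :
    lapBlock G W x z = if x = b ∧ z = a then -W s(a, b) else 0 := by
  have hxz : x ≠ z := by rintro rfl; exact hz hx
  simp only [lapBlock, Matrix.of_apply, if_neg hxz]
  split_ifs with hxz' hba hba
  · rw [hba.1, hba.2, Sym2.eq_swap]
  · exact absurd (eq_and_eq_of_adj_of_mem_branch hT hab hxz' hx hz) hba
  · obtain ⟨rfl, rfl⟩ := hba
    exact absurd hab.symm hxz'
  · rfl

theorem sum_branch_lapBlock_mul (hab : G.Adj a b) {x : V} (hx : x ∈ branch hT a b)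
    (g : V → Matrix (Fin d) (Fin d) ℝ) :
    ∑ y : branch hT a b, lapBlock G W x y * g y =
      ∑ y, lapBlock G W x y * g y + if x = b then W s(a, b) * g a else 0 := by
  have ha : a ∉ branch hT a b := fun h => h.1 rfl
  have hout : ∑ y : {y // y ∉ branch hT a b}, lapBlock G W x y * g y =
      -if x = b then W s(a, b) * g a else 0 := by
    rw [Fintype.sum_eq_single ⟨a, ha⟩ fun y hy => ?_]
    · rw [lapBlock_of_mem_branch_of_notMem hT W hab hx ha]
      by_cases hxb : x = b <;> simp [hxb]
    · rw [lapBlock_of_mem_branch_of_notMem hT W hab hx y.2,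
        if_neg fun h => hy (Subtype.ext h.2), zero_mul]
  rw [← Fintype.sum_subtype_add_sum_subtype (· ∈ branch hT a b), hout]
  abel

end Branch

section BranchInverse

variable {V : Type*} [Fintype V] {G : SimpleGraph V} (hT : G.IsTree) {d : ℕ}
  (W : Sym2 V → Matrix (Fin d) (Fin d) ℝ) {a b : V} [DecidableEq V]

theorem submatrix_lapBlock_mul_rootedBottleneck (hW : ∀ e ∈ G.edgeSet, IsUnit (W e))
    (hab : G.Adj a b) :
    (lapBlock G W).submatrix (↑) (↑) * (rootedBottleneck hT W a).submatrix (↑) (↑) =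
      (1 : Matrix (branch hT a b) (branch hT a b) (Matrix (Fin d) (Fin d) ℝ)) := by
  ext1 x z
  rw [Matrix.mul_apply, Matrix.one_apply]
  simp only [Matrix.submatrix_apply]
  rw [sum_branch_lapBlock_mul hT W hab x.2 (rootedBottleneck hT W a · z),
    rootedBottleneck_root_apply, mul_zero, ite_self, add_zero, ← Matrix.mul_apply,
    lapBlock_mul_rootedBottleneck hT W hW x.2.1]
  simp [Subtype.ext_iff]

theorem submatrix_lapBlock_mul_of_const (hW : IsUnit (W s(a, b))) (hab : G.Adj a b) :
    (lapBlock G W).submatrix (↑) (↑) * Matrix.of (fun (_ _ : branch hT a b) => (W s(a, b))⁻¹) =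
      Matrix.of fun (x : branch hT a b) _ => if (x : V) = b then 1 else 0 := by
  ext1 x z
  rw [Matrix.mul_apply]
  simp only [Matrix.submatrix_apply, Matrix.of_apply]
  rw [sum_branch_lapBlock_mul hT W hab x.2 fun _ => (W s(a, b))⁻¹, ← Finset.sum_mul,
    sum_lapBlock, zero_mul, zero_add,
    Matrix.mul_nonsing_inv _ ((Matrix.isUnit_iff_isUnit_det _).mp hW)]
  congr 1

theorem inv_bottleneck_sub (hW : ∀ e ∈ G.edgeSet, IsUnit (W e)) (hab : G.Adj a b) {β : ℝ}
    (hβ : β ≠ 1) :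
    (bottleneck hT d W a b -
        Matrix.of fun p q : branch hT a b × Fin d => β * (W s(a, b))⁻¹ p.2 q.2)⁻¹ =
      Matrix.of fun p q : branch hT a b × Fin d => lap G d W (p.1, p.2) (q.1, q.2) +
        (if (p.1 : V) = b ∧ (q.1 : V) = b then β / (1 - β) else 0) * W s(a, b) p.2 q.2 := by
  have hWe : W s(a, b) * (W s(a, b))⁻¹ = 1 :=
    Matrix.mul_nonsing_inv _ ((Matrix.isUnit_iff_isUnit_det _).mp (hW _ hab))
  set B := branch hT a b
  set bb : B := ⟨b, mem_branch_self hT hab⟩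
  set M : Matrix B B (Matrix (Fin d) (Fin d) ℝ) := (rootedBottleneck hT W a).submatrix (↑) (↑)
  set J : Matrix B B (Matrix (Fin d) (Fin d) ℝ) := Matrix.of fun _ _ => (W s(a, b))⁻¹
  set S : Matrix B B (Matrix (Fin d) (Fin d) ℝ) := Matrix.single bb bb (W s(a, b))
  have hSM : S * M = Matrix.of fun (x : B) _ => if (x : V) = b then 1 else 0 := by
    ext1 x z
    by_cases hx : x = bb
    · simp [S, M, hx, Matrix.single_mul_apply_same, bb,
        rootedBottleneck_apply_of_mem_branch hT W hab z.2, hWe]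
    · have hx' : (x : V) ≠ b := fun h => hx (Subtype.ext h)
      simp [S, Matrix.single_mul_apply_of_ne (h := hx), hx']
  have hSJ : S * J = Matrix.of fun (x : B) _ => if (x : V) = b then 1 else 0 := by
    ext1 x z
    by_cases hx : x = bb
    · simp [S, J, hx, Matrix.single_mul_apply_same, bb, hWe]
    · have hx' : (x : V) ≠ b := fun h => hx (Subtype.ext h)
      simp [S, Matrix.single_mul_apply_of_ne (h := hx), hx']
  have hc : β / (1 - β) * (1 - β) = β := div_mul_cancel₀ _ (sub_ne_zero.mpr hβ.symm)
  have hA : bottleneck hT d W a b -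
      Matrix.of (fun p q : B × Fin d => β * (W s(a, b))⁻¹ p.2 q.2) =
        Matrix.comp B B (Fin d) (Fin d) ℝ (M - β • J) := rfl
  rw [hA, Matrix.inv_comp_eq_of_mul_eq_one (add_smul_mul_sub_smul_eq_one
    (submatrix_lapBlock_mul_rootedBottleneck hT W hW hab)
    (submatrix_lapBlock_mul_of_const hT W (hW _ hab) hab) hSM hSJ hc)]
  ext ⟨x, i⟩ ⟨z, k⟩
  simp only [S, Matrix.of_apply, Matrix.comp_apply, Matrix.add_apply, Matrix.smul_apply,
    Matrix.submatrix_apply, lap_apply_eq_lapBlock, Matrix.single_apply, bb, Subtype.ext_iff,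
    eq_comm (a := b)]
  split_ifs <;> simp

end BranchInverse

/-- For a tree with nonsingular matrix edge weights, an edge between `u` and `v` with
weight `W(e)`, and `0 < α < 1`: `L(T) + E ⊗ W(e)` is the block diagonal matrix
`diag([M_u(v) - α(J ⊗ W(e)⁻¹)]⁻¹, [M_v(u) - (1-α)(J ⊗ W(e)⁻¹)]⁻¹)`. -/
theorem lap_add_E_eq_blockDiagonal {V : Type*} [Fintype V] [DecidableEq V]
    (G : SimpleGraph V) (hT : G.IsTree) (d : ℕ)
    (W : Sym2 V → Matrix (Fin d) (Fin d) ℝ)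
    (hW : ∀ e ∈ G.edgeSet, IsUnit (W e))
    (u v : V) (hadj : G.Adj u v) (α : ℝ) (hα0 : 0 < α) (hα1 : α < 1) :
    letI We := W (Sym2.mk u v)
    letI E : V → V → ℝ := fun x y =>
      if x = v ∧ y = v then α / (1 - α)
      else if x = u ∧ y = u then (1 - α) / α
      else if (x = u ∧ y = v) ∨ (x = v ∧ y = u) then 1
      else 0
    letI A : Matrix (↥(branch hT u v) × Fin d) (↥(branch hT u v) × Fin d) ℝ :=
      bottleneck hT d W u v -
        Matrix.of (fun p q : ↥(branch hT u v) × Fin d => α * We⁻¹ p.2 q.2)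
    letI B : Matrix (↥(branch hT v u) × Fin d) (↥(branch hT v u) × Fin d) ℝ :=
      bottleneck hT d W v u -
        Matrix.of (fun p q : ↥(branch hT v u) × Fin d => (1 - α) * We⁻¹ p.2 q.2)
    ∀ p q : V × Fin d,
      (lap G d W + Matrix.of (fun p q : V × Fin d => E p.1 q.1 * We p.2 q.2)) p q =
        if hp : p.1 ∈ branch hT u v then
          (if hq : q.1 ∈ branch hT u v then A⁻¹ (⟨p.1, hp⟩, p.2) (⟨q.1, hq⟩, q.2) else 0)
        else if hp' : p.1 ∈ branch hT v u then
          (if hq' : q.1 ∈ branch hT v u then B⁻¹ (⟨p.1, hp'⟩, p.2) (⟨q.1, hq'⟩, q.2) else 0)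
        else 0 := by
  intro p q
  obtain ⟨x, i⟩ := p
  obtain ⟨z, k⟩ := q
  have hBu := inv_bottleneck_sub hT W hW hadj (β := α) hα1.ne
  have hBv := inv_bottleneck_sub hT W hW hadj.symm (β := 1 - α) (by linarith)
  rw [Sym2.eq_swap, sub_sub_cancel] at hBv
  by_cases hx : x ∈ branch hT u v <;> by_cases hz : z ∈ branch hT u v
  · simp [hx, hz, hBu, hx.1, hz.1]
  · simp only [hx, hz, dif_pos, dif_neg, not_false_eq_true, Matrix.add_apply, Matrix.of_apply,
      lap_apply_eq_lapBlock, lapBlock_of_mem_branch_of_notMem hT W hadj hx hz]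
    have hzv : z ≠ v := by rintro rfl; exact hz (mem_branch_self hT hadj)
    split_ifs <;> simp_all [hx.1]
  · have hx' := (mem_branch_swap_iff hT hadj).mpr hx
    have hz' : z ∉ branch hT v u := fun h => (mem_branch_swap_iff hT hadj).mp h hz
    simp only [hx, hx', hz', dif_pos, dif_neg, not_false_eq_true, Matrix.add_apply,
      Matrix.of_apply, lap_apply_eq_lapBlock,
      lapBlock_of_mem_branch_of_notMem hT W hadj.symm hx' hz', Sym2.eq_swap (a := v)]
    split_ifs <;> simp_all [hx'.1, hz.1]
  · have hx' := (mem_branch_swap_iff hT hadj).mpr hx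
    have hz' := (mem_branch_swap_iff hT hadj).mpr hz
    simp [hx, hx', hz', hBv, hx'.1, hz'.1]
end

section
/- Let T be a tree whose edge weights are s×s lower triangular matrices with positive diagonal entries, and let L(T) be its Laplacian. Then the spectrum of L(T) equals the union over j = 1,…,s of the spectra of the (scalar) Laplacians L(T^{(j)}) of the induced positively weighted trees T^{(j)}; in particular, all eigenvalues of L(T) are nonnegative, and the smallest nonzero eigenvalue of L(T) equals min_{1 ≤ j ≤ s} μ(T^{(j)}), the minimum of the algebraic connectivities of the T^{(j)}. -/
open scoped Classical
open Matrix

/-- The Laplacian matrix of a graph with scalar edge weights. -/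
noncomputable def scalarLap {V : Type*} [Fintype V] (G : SimpleGraph V)
    (w : Sym2 V → ℝ) : Matrix V V ℝ :=
  Matrix.of fun x y =>
    if x = y then ∑ z ∈ G.neighborFinset x, w (Sym2.mk x z)
    else if G.Adj x y then -w (Sym2.mk x y) else 0

/-! Listing the coordinates of `L(T)` by block index first makes it block lower triangular, since
every edge weight is; its diagonal blocks are the scalar Laplacians `L(T^{(j)})`, so
`det (μ - L(T))` factors and the spectra unite. A Laplacian with nonnegative weights is positive
semidefinite (its quadratic form is a weighted sum of squares `(x u - x v) ^ 2`), which gives the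
nonnegativity. With positive weights each `L(T^{(j)})` vanishes exactly when the graph has no
edge, so either all of them have a nonzero eigenvalue or none has; in both cases the minimum of
the nonzero spectra commutes with the union, even with the convention `sInf ∅ = 0`. -/

open OrderDual
open scoped ComplexOrder

namespace Matrix

variable {n ι R : Type*} [Fintype n] [DecidableEq n] [Fintype ι] [LinearOrder ι]

theorem BlockTriangular.det_eq_prod_det_submatrix_snd [CommRing R]
    {M : Matrix (n × ι) (n × ι) R} (hM : M.BlockTriangular fun p => toDual p.2) :
    M.det = ∏ i, (M.submatrix (·, i) (·, i)).det := by
  rw [hM.det_fintype, ← toDual.prod_comp]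
  refine Finset.prod_congr rfl fun i _ => ?_
  let e : n ≃ {p : n × ι // toDual p.2 = toDual i} :=
    { toFun := fun v => ⟨(v, i), rfl⟩
      invFun := fun p => p.1.1
      left_inv := fun _ => rfl
      right_inv := fun ⟨⟨_, _⟩, h⟩ => by cases toDual.injective h; rfl }
  exact (det_submatrix_equiv_self e _).symm

theorem BlockTriangular.spectrum_eq_iUnion_spectrum_submatrix_snd {K : Type*} [Field K]
    {M : Matrix (n × ι) (n × ι) K} (hM : M.BlockTriangular fun p => toDual p.2) :
    spectrum K M = ⋃ i, spectrum K (M.submatrix (·, i) (·, i)) := by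
  ext μ
  have hμ := (blockTriangular_algebraMap (b := fun p : n × ι => toDual p.2) μ).sub hM
  simp only [spectrum.mem_iff, isUnit_iff_isUnit_det, isUnit_iff_ne_zero, not_not, Set.mem_iUnion]
  rw [hμ.det_eq_prod_det_submatrix_snd, Finset.prod_eq_zero_iff]
  refine exists_congr fun i => ?_
  rw [and_iff_right (Finset.mem_univ i)]
  congr! 2
  ext u v
  simp [algebraMap_matrix_apply]

end Matrix

theorem Real.sInf_iUnion_eq_sInf_range_sInf {ι : Type*} [Finite ι] {s : ι → Set ℝ}
    (hb : ∀ i, BddBelow (s i)) (hs : (∀ i, (s i).Nonempty) ∨ ∀ i, s i = ∅) :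
    sInf (⋃ i, s i) = sInf (Set.range fun i => sInf (s i)) := by
  rcases isEmpty_or_nonempty ι with hι | hι
  · simp [Set.range_eq_empty]
  rcases hs with hne | hemp
  · have hbU : BddBelow (⋃ i, s i) := by
      simpa using Set.finite_univ.bddBelow_biUnion.2 fun i _ => hb i
    apply le_antisymm
    · exact le_ciInf fun i => csInf_le_csInf hbU (hne i) (Set.subset_iUnion s i)
    · refine le_csInf ((hne hι.some).mono (Set.subset_iUnion s _)) fun r hr => ?_
      obtain ⟨i, hri⟩ := Set.mem_iUnion.1 hr
      exact (ciInf_le (Set.finite_range _).bddBelow i).trans (csInf_le (hb i) hri)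
  · simp [hemp]

namespace Matrix

variable {n : Type*} [Fintype n]

theorem PosSemidef.map_ofReal {M : Matrix n n ℝ} (hM : M.PosSemidef) :
    (M.map ((↑) : ℝ → ℂ)).PosSemidef := by
  obtain ⟨m, v, rfl⟩ := posSemidef_iff_eq_sum_vecMulVec.mp hM
  have hmap : (∑ i, vecMulVec (v i) (star (v i))).map ((↑) : ℝ → ℂ) =
      ∑ i, vecMulVec (fun k => (v i k : ℂ)) (star fun k => (v i k : ℂ)) := by
    ext a b
    simp [Matrix.sum_apply, vecMulVec_apply]
  rw [hmap]
  exact posSemidef_sum _ fun i _ => posSemidef_vecMulVec_self_star _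

variable [DecidableEq n] {𝕜 : Type*} [RCLike 𝕜] {A : Matrix n n 𝕜}

theorem PosSemidef.exists_nonneg_eq_ofReal_of_mem_spectrum (hA : A.PosSemidef) {μ : 𝕜}
    (hμ : μ ∈ spectrum 𝕜 A) : ∃ r : ℝ, 0 ≤ r ∧ μ = r := by
  have hμ₀ : 0 ≤ μ := (posSemidef_iff_isHermitian_and_spectrum_nonneg.1 hA).2 hμ
  obtain ⟨r, hr, rfl⟩ := RCLike.nonneg_iff_exists_ofReal.1 hμ₀
  exact ⟨r, hr, rfl⟩

theorem IsHermitian.exists_ne_zero_ofReal_mem_spectrum_iff (hA : A.IsHermitian) :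
    (∃ r : ℝ, r ≠ 0 ∧ (r : 𝕜) ∈ spectrum 𝕜 A) ↔ A ≠ 0 := by
  refine ⟨?_, fun h => ?_⟩
  · rintro ⟨r, hr, hmem⟩ rfl
    rw [spectrum.mem_iff, sub_zero] at hmem
    exact hmem ((RCLike.ofReal_ne_zero.2 hr).isUnit.map _)
  · obtain ⟨i, hi⟩ := Function.ne_iff.1 (mt hA.eigenvalues_eq_zero_iff.1 h)
    exact ⟨hA.eigenvalues i, hi, hA.spectrum_eq_image_range ▸ ⟨_, ⟨i, rfl⟩, rfl⟩⟩

end Matrix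

section Laplacian

variable {V : Type*} [Fintype V] (G : SimpleGraph V)

theorem lap_blockTriangular {d : ℕ} {W : Sym2 V → Matrix (Fin d) (Fin d) ℝ}
    (htri : ∀ e ∈ G.edgeSet, ∀ l k : Fin d, l < k → W e l k = 0) :
    (lap G d W).BlockTriangular fun p => toDual p.2 := by
  rintro ⟨u, l⟩ ⟨v, k⟩ (hlk : l < k)
  simp only [lap, of_apply]
  split_ifs with huv hadj
  · subst huv
    rw [Matrix.sum_apply]
    exact Finset.sum_eq_zero fun z hz =>
      htri _ (G.mem_edgeSet.2 ((G.mem_neighborFinset _ _).1 hz)) _ _ hlk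
  · rw [htri _ (G.mem_edgeSet.2 hadj) _ _ hlk, neg_zero]
  · rfl

theorem lap_submatrix_snd (d : ℕ) (W : Sym2 V → Matrix (Fin d) (Fin d) ℝ) (j : Fin d) :
    (lap G d W).submatrix (·, j) (·, j) = scalarLap G fun e => W e j j := by
  ext u v
  simp [lap, scalarLap, Matrix.sum_apply]

variable (w : Sym2 V → ℝ)

theorem scalarLap_isHermitian : (scalarLap G w).IsHermitian := by
  ext u v
  by_cases h : u = v
  · subst h; rfl
  · simp [scalarLap, h, Ne.symm h, G.adj_comm, Sym2.eq_swap]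

theorem scalarLap_mulVec_apply (x : V → ℝ) (u : V) :
    (scalarLap G w *ᵥ x) u = ∑ v, if G.Adj u v then w s(u, v) * (x u - x v) else 0 := by
  have hdeg :
      ∑ z ∈ G.neighborFinset u, w s(u, z) = ∑ v, if G.Adj u v then w s(u, v) else 0 := by
    rw [SimpleGraph.neighborFinset_eq_filter, Finset.sum_filter]
  calc (scalarLap G w *ᵥ x) u
      = ∑ v, ((if u = v then (∑ v, if G.Adj u v then w s(u, v) else 0) * x u else 0)
          - if G.Adj u v then w s(u, v) * x v else 0) := by
        refine Finset.sum_congr rfl fun v _ => ?_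
        simp only [scalarLap, of_apply, hdeg]
        by_cases huv : u = v
        · subst huv; simp
        · simp only [huv, if_false]; split_ifs <;> ring
    _ = ∑ v, if G.Adj u v then w s(u, v) * (x u - x v) else 0 := by
        rw [Finset.sum_sub_distrib, Finset.sum_ite_eq, if_pos (Finset.mem_univ u), Finset.sum_mul,
          ← Finset.sum_sub_distrib]
        refine Finset.sum_congr rfl fun v _ => ?_
        split_ifs <;> ring

theorem scalarLap_dotProduct_mulVec (x : V → ℝ) :
    x ⬝ᵥ (scalarLap G w *ᵥ x) =
      (∑ u, ∑ v, if G.Adj u v then w s(u, v) * (x u - x v) ^ 2 else 0) / 2 := by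
  let f u v := if G.Adj u v then w s(u, v) * (x u * (x u - x v)) else 0
  have hf : x ⬝ᵥ (scalarLap G w *ᵥ x) = ∑ u, ∑ v, f u v := by
    simp only [dotProduct, scalarLap_mulVec_apply, Finset.mul_sum, f]
    refine Finset.sum_congr rfl fun u _ => Finset.sum_congr rfl fun v _ => ?_
    split_ifs <;> ring
  rw [eq_div_iff two_ne_zero, hf, mul_two]
  nth_rewrite 2 [Finset.sum_comm]
  rw [← Finset.sum_add_distrib]
  refine Finset.sum_congr rfl fun u _ => ?_
  rw [← Finset.sum_add_distrib]
  refine Finset.sum_congr rfl fun v _ => ?_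
  simp only [f, G.adj_comm v u, Sym2.eq_swap (a := v)]
  split_ifs <;> ring

theorem scalarLap_posSemidef (hw : ∀ e ∈ G.edgeSet, 0 ≤ w e) :
    (scalarLap G w).PosSemidef := by
  refine .of_dotProduct_mulVec_nonneg (scalarLap_isHermitian G w) fun x => ?_
  rw [star_trivial, scalarLap_dotProduct_mulVec]
  refine div_nonneg (Finset.sum_nonneg fun u _ => Finset.sum_nonneg fun v _ => ?_) zero_le_two
  split_ifs with h
  · exact mul_nonneg (hw _ (G.mem_edgeSet.2 h)) (sq_nonneg _)
  · exact le_rfl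

theorem scalarLap_eq_zero_iff (hw : ∀ e ∈ G.edgeSet, w e ≠ 0) :
    scalarLap G w = 0 ↔ G = ⊥ := by
  constructor
  · intro h
    by_contra hG
    obtain ⟨u, v, huv⟩ := SimpleGraph.ne_bot_iff_exists_adj.1 hG
    have := congrFun (congrFun h u) v
    simp [scalarLap, huv.ne, huv] at this
    exact hw _ (G.mem_edgeSet.2 huv) this
  · rintro rfl
    ext u v
    simp [scalarLap]

variable [DecidableEq V]

theorem spectrum_lap_map_ofReal {d : ℕ} {W : Sym2 V → Matrix (Fin d) (Fin d) ℝ}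
    (htri : ∀ e ∈ G.edgeSet, ∀ l k : Fin d, l < k → W e l k = 0) :
    spectrum ℂ ((lap G d W).map (fun x : ℝ => (x : ℂ))) =
      ⋃ j, spectrum ℂ ((scalarLap G fun e => W e j j).map (fun x : ℝ => (x : ℂ))) := by
  have hL : ((lap G d W).map (fun x : ℝ => (x : ℂ))).BlockTriangular fun p => toDual p.2 :=
    (lap_blockTriangular G htri).map Complex.ofRealHom
  rw [hL.spectrum_eq_iUnion_spectrum_submatrix_snd]
  simp only [submatrix_map, lap_submatrix_snd]

theorem exists_ne_zero_ofReal_mem_spectrum_scalarLap_iff (hw : ∀ e ∈ G.edgeSet, 0 < w e) :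
    (∃ r : ℝ, r ≠ 0 ∧ (r : ℂ) ∈ spectrum ℂ ((scalarLap G w).map ((↑) : ℝ → ℂ))) ↔ G ≠ ⊥ := by
  have hL := ((scalarLap_posSemidef G w fun e he => (hw e he).le).map_ofReal).isHermitian
  refine hL.exists_ne_zero_ofReal_mem_spectrum_iff.trans (not_congr ?_)
  rw [← scalarLap_eq_zero_iff G w fun e he => (hw e he).ne']
  exact (map_injective Complex.ofReal_injective).eq_iff' (Matrix.map_zero _ Complex.ofReal_zero)

end Laplacian

theorem lap_spectrum_lowerTriangular_general {V : Type*} [Fintype V] [DecidableEq V]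
    (G : SimpleGraph V) (d : ℕ)
    (W : Sym2 V → Matrix (Fin d) (Fin d) ℝ)
    (htri : ∀ e ∈ G.edgeSet, ∀ l k : Fin d, l < k → W e l k = 0)
    (hdiag : ∀ e ∈ G.edgeSet, ∀ j : Fin d, 0 < W e j j) :
    letI Lc := (lap G d W).map (fun x : ℝ => (x : ℂ))
    letI Ljc : Fin d → Matrix V V ℂ := fun j =>
      (scalarLap G (fun e => W e j j)).map (fun x : ℝ => (x : ℂ))
    spectrum ℂ Lc = (⋃ j : Fin d, spectrum ℂ (Ljc j)) ∧
    (∀ μ ∈ spectrum ℂ Lc, ∃ r : ℝ, 0 ≤ r ∧ μ = (r : ℂ)) ∧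
    sInf {r : ℝ | r ≠ 0 ∧ (r : ℂ) ∈ spectrum ℂ Lc} =
      sInf (Set.range fun j : Fin d =>
        sInf {r : ℝ | r ≠ 0 ∧ (r : ℂ) ∈ spectrum ℂ (Ljc j)}) := by
  set Lc := (lap G d W).map (fun x : ℝ => (x : ℂ))
  set Ljc : Fin d → Matrix V V ℂ := fun j =>
    (scalarLap G (fun e => W e j j)).map (fun x : ℝ => (x : ℂ))
  have hspec : spectrum ℂ Lc = ⋃ j, spectrum ℂ (Ljc j) := spectrum_lap_map_ofReal G htri
  have hpsd (j : Fin d) : (Ljc j).PosSemidef :=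
    (scalarLap_posSemidef G _ fun e he => (hdiag e he j).le).map_ofReal
  refine ⟨hspec, ?_, ?_⟩
  · simp only [hspec, Set.mem_iUnion]
    rintro μ ⟨j, hμ⟩
    exact (hpsd j).exists_nonneg_eq_ofReal_of_mem_spectrum hμ
  have hS : {r : ℝ | r ≠ 0 ∧ (r : ℂ) ∈ spectrum ℂ Lc} =
      ⋃ j, {r : ℝ | r ≠ 0 ∧ (r : ℂ) ∈ spectrum ℂ (Ljc j)} := by
    ext r
    simp [hspec]
  rw [hS]
  refine Real.sInf_iUnion_eq_sInf_range_sInf (fun j => ⟨0, ?_⟩) ?_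
  · rintro r ⟨-, hr⟩
    obtain ⟨s, hs, hrs⟩ := (hpsd j).exists_nonneg_eq_ofReal_of_mem_spectrum hr
    exact (Complex.ofReal_injective hrs).symm ▸ hs
  have hnonzero (j : Fin d) :=
    exists_ne_zero_ofReal_mem_spectrum_scalarLap_iff G _ (hdiag · · j)
  by_cases hG : G = ⊥
  · exact Or.inr fun j => Set.not_nonempty_iff_eq_empty.1 fun h => (hnonzero j).1 h hG
  · exact Or.inl fun j => (hnonzero j).2 hG

/-- For a tree with lower triangular matrix edge weights with positive diagonal entries:
the spectrum of the block Laplacian `L(T)` is the union of the spectra of the scalar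
Laplacians `L(T^{(j)})`; all eigenvalues of `L(T)` are (real and) nonnegative; and the
smallest nonzero eigenvalue of `L(T)` is the minimum over `j` of the smallest nonzero
eigenvalue (the algebraic connectivity) of `L(T^{(j)})`. -/
theorem lap_spectrum_lowerTriangular {V : Type*} [Fintype V] [DecidableEq V]
    (G : SimpleGraph V) (hT : G.IsTree) (d : ℕ) (hd : 0 < d)
    (W : Sym2 V → Matrix (Fin d) (Fin d) ℝ)
    (htri : ∀ e ∈ G.edgeSet, ∀ l k : Fin d, l < k → W e l k = 0)
    (hdiag : ∀ e ∈ G.edgeSet, ∀ j : Fin d, 0 < W e j j) :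
    letI Lc := (lap G d W).map (fun x : ℝ => (x : ℂ))
    letI Ljc : Fin d → Matrix V V ℂ := fun j =>
      (scalarLap G (fun e => W e j j)).map (fun x : ℝ => (x : ℂ))
    spectrum ℂ Lc = (⋃ j : Fin d, spectrum ℂ (Ljc j)) ∧
    (∀ μ ∈ spectrum ℂ Lc, ∃ r : ℝ, 0 ≤ r ∧ μ = (r : ℂ)) ∧
    sInf {r : ℝ | r ≠ 0 ∧ (r : ℂ) ∈ spectrum ℂ Lc} =
      sInf (Set.range fun j : Fin d =>
        sInf {r : ℝ | r ≠ 0 ∧ (r : ℂ) ∈ spectrum ℂ (Ljc j)}) :=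
  lap_spectrum_lowerTriangular_general G d W htri hdiag
end
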